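/- arXiv:0912.3358 — 2 statements merged into one kernel-verified Lean document; each statement's English description precedes it below -/
import Mathlib

section
/- Suppose the Banach space 𝒳 has weak RMF with constant C. Then for all δ ∈ (0,1) and β > 2δ + 1, every L^p-bounded (1 < p < ∞) standard Haar martingale X in 𝒳 satisfies, for every λ > 0, ℙ(X_R^* > βλ and X^* ≤ δλ) ≤ α(δ) ℙ(X_R^* > λ), where α(δ) = 4Cδ/(β − 2δ − 1); in particular α(δ) → 0 as δ → 0. -/
open MeasureTheory Finset Set
open scoped ENNReal NNReal

noncomputable section

namespace RMF

open scoped Classical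

universe u

/-- The average `2^{-N} ∑_{ε ∈ {-1,1}^N} ‖∑ⱼ εⱼ • xⱼ‖²` over all choices of signs. -/
def radAvg {E : Type*} [NormedAddCommGroup E] [NormedSpace ℝ E] {N : ℕ}
    (x : Fin N → E) : ℝ :=
  (2 ^ N : ℝ)⁻¹ * ∑ ε : Fin N → Bool, ‖∑ j, (if ε j then (1 : ℝ) else -1) • x j‖ ^ 2

/-- `E` has type `p`. -/
def HasType (E : Type*) [NormedAddCommGroup E] [NormedSpace ℝ E] (p : ℝ) : Prop :=
  ∃ C : ℝ, 0 ≤ C ∧ ∀ (N : ℕ) (x : Fin N → E),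
    Real.sqrt (radAvg x) ≤ C * (∑ j, ‖x j‖ ^ p) ^ (1 / p)

/-- `E` has cotype `q`. -/
def HasCotype (E : Type*) [NormedAddCommGroup E] [NormedSpace ℝ E] (q : ℝ) : Prop :=
  ∃ C : ℝ, 0 ≤ C ∧ ∀ (N : ℕ) (x : Fin N → E),
    (∑ j, ‖x j‖ ^ q) ^ (1 / q) ≤ C * Real.sqrt (radAvg x)

/-- `C` is an R-bound for the set `S` of vectors (scalar test sequences). -/
def IsRBound {𝒳 : Type*} [NormedAddCommGroup 𝒳] [NormedSpace ℝ 𝒳]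
    (S : Set 𝒳) (C : ℝ) : Prop :=
  0 ≤ C ∧ ∀ (N : ℕ) (y : Fin N → 𝒳) (l : Fin N → ℝ), (∀ j, y j ∈ S) →
    radAvg (fun j => l j • y j) ≤ C ^ 2 * radAvg l

/-- The R-bound `𝓡(S) ∈ [0,∞]` of a set of vectors. -/
def Rbound {𝒳 : Type*} [NormedAddCommGroup 𝒳] [NormedSpace ℝ 𝒳] (S : Set 𝒳) : ℝ≥0∞ :=
  sInf {c : ℝ≥0∞ | ∃ r : ℝ, IsRBound S r ∧ c = ENNReal.ofReal r}

/-- `C` is an R-bound for the family `S` of operators. -/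
def IsRBoundOp {H E : Type*} [NormedAddCommGroup H] [NormedSpace ℝ H]
    [NormedAddCommGroup E] [NormedSpace ℝ E] (S : Set (H →L[ℝ] E)) (C : ℝ) : Prop :=
  0 ≤ C ∧ ∀ (N : ℕ) (T : Fin N → H →L[ℝ] E) (x : Fin N → H), (∀ j, T j ∈ S) →
    radAvg (fun j => T j (x j)) ≤ C ^ 2 * radAvg x

/-- The R-bound `𝓡(S) ∈ [0,∞]` of a family of operators. -/
def RboundOp {H E : Type*} [NormedAddCommGroup H] [NormedSpace ℝ H]
    [NormedAddCommGroup E] [NormedSpace ℝ E] (S : Set (H →L[ℝ] E)) : ℝ≥0∞ :=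
  sInf {c : ℝ≥0∞ | ∃ r : ℝ, IsRBoundOp S r ∧ c = ENNReal.ofReal r}

/-- The average of `f` over the standard dyadic interval of generation `j` containing `ξ`. -/
def dyAvg {𝒳 : Type*} [NormedAddCommGroup 𝒳] [NormedSpace ℝ 𝒳] (f : ℝ → 𝒳) (j : ℤ)
    (ξ : ℝ) : 𝒳 :=
  ((2 : ℝ) ^ j) • ∫ t in Set.Ico ((⌊(2 : ℝ) ^ j * ξ⌋ : ℝ) / (2 : ℝ) ^ j)
      (((⌊(2 : ℝ) ^ j * ξ⌋ : ℝ) + 1) / (2 : ℝ) ^ j), f t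

/-- The standard dyadic cube of generation `j` containing `ξ` in `ℝⁿ`. -/
def dyCube (n : ℕ) (j : ℤ) (ξ : Fin n → ℝ) : Set (Fin n → ℝ) :=
  {η | ∀ i, ⌊(2 : ℝ) ^ j * η i⌋ = ⌊(2 : ℝ) ^ j * ξ i⌋}

/-- The average of `f` over the standard dyadic cube of generation `j` containing `ξ`. -/
def cubeAvg {n : ℕ} {𝒳 : Type*} [NormedAddCommGroup 𝒳] [NormedSpace ℝ 𝒳]
    (f : (Fin n → ℝ) → 𝒳) (j : ℤ) (ξ : Fin n → ℝ) : 𝒳 :=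
  ((2 : ℝ) ^ (j * (n : ℤ))) • ∫ η in dyCube n j ξ, f η

/-- The Rademacher maximal function w.r.t. the standard dyadic cubes in `ℝⁿ`. -/
def MRcube {n : ℕ} {𝒳 : Type*} [NormedAddCommGroup 𝒳] [NormedSpace ℝ 𝒳]
    (f : (Fin n → ℝ) → 𝒳) (ξ : Fin n → ℝ) : ℝ≥0∞ :=
  Rbound {y : 𝒳 | ∃ j : ℤ, y = cubeAvg f j ξ}

/-- The Rademacher maximal function w.r.t. the dyadic intervals of `[0,1)`. -/
def MRdyadic01 {𝒳 : Type*} [NormedAddCommGroup 𝒳] [NormedSpace ℝ 𝒳]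
    (f : ℝ → 𝒳) (ξ : ℝ) : ℝ≥0∞ :=
  Rbound {y : 𝒳 | ∃ j : ℕ, y = dyAvg f (j : ℤ) ξ}

/-- The operator-valued Rademacher maximal function w.r.t. the standard dyadic
intervals on `ℝ`. -/
def MRlineOp {H E : Type*} [NormedAddCommGroup H] [NormedSpace ℝ H]
    [NormedAddCommGroup E] [NormedSpace ℝ E] (f : ℝ → (H →L[ℝ] E)) (ξ : ℝ) : ℝ≥0∞ :=
  RboundOp {T : H →L[ℝ] E | ∃ j : ℤ, T = dyAvg f j ξ}

/-- The operator-valued Rademacher maximal function w.r.t. the dyadic intervals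
of `[0,1)`. -/
def MRdyadic01Op {H E : Type*} [NormedAddCommGroup H] [NormedSpace ℝ H]
    [NormedAddCommGroup E] [NormedSpace ℝ E] (f : ℝ → (H →L[ℝ] E)) (ξ : ℝ) : ℝ≥0∞ :=
  RboundOp {T : H →L[ℝ] E | ∃ j : ℕ, T = dyAvg f (j : ℤ) ξ}

/-- The Rademacher maximal function w.r.t. a family of sub-σ-algebras. -/
def MRfilt {𝒳 : Type*} [NormedAddCommGroup 𝒳] [NormedSpace ℝ 𝒳] [CompleteSpace 𝒳]
    {Ω ι : Type*} [m0 : MeasurableSpace Ω] (μ : Measure Ω) (m : ι → MeasurableSpace Ω)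
    (f : Ω → 𝒳) (ξ : Ω) : ℝ≥0∞ :=
  Rbound {y : 𝒳 | ∃ j : ι, y = (μ[f| m j]) ξ}

/-- `𝒳` has `RMF_p` with constant `C` w.r.t. the family `m` of sub-σ-algebras on `(Ω, μ)`. -/
def RMFpWith (𝒳 : Type*) [NormedAddCommGroup 𝒳] [NormedSpace ℝ 𝒳] [CompleteSpace 𝒳]
    (p C : ℝ) {Ω ι : Type*} [m0 : MeasurableSpace Ω] (μ : Measure Ω)
    (m : ι → MeasurableSpace Ω) : Prop :=
  ∀ f : Ω → 𝒳, MemLp f (ENNReal.ofReal p) μ →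
    (∫⁻ ξ, MRfilt μ m f ξ ^ p ∂μ) ^ (1 / p) ≤
      ENNReal.ofReal C * eLpNorm f (ENNReal.ofReal p) μ

/-- A measure is divisible if any set of positive measure contains subsets of any
prescribed fraction of its measure. -/
def Divisible {Ω : Type*} [MeasurableSpace Ω] (μ : Measure Ω) : Prop :=
  ∀ A : Set Ω, MeasurableSet A → 0 < μ A → ∀ c : ℝ, 0 < c → c < 1 →
    ∃ B : Set Ω, MeasurableSet B ∧ B ⊆ A ∧ μ B = ENNReal.ofReal c * μ A

/-- A Haar filtration on `(Ω, μ)`: `part j` is the generating partition of the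
`(j+1)`-st σ-algebra of the filtration (so it has `j + 2` members), and each
partition arises from the previous one by splitting the set `splitSet j` into the
two pieces `piece1 j` and `piece2 j` of positive measure; `part 0` itself arises by
splitting `Ω` in two. -/
structure HaarSystem (Ω : Type*) [m0 : MeasurableSpace Ω] (μ : Measure Ω) where
  part : ℕ → Finset (Set Ω)
  card_part : ∀ j, (part j).card = j + 2
  meas : ∀ j, ∀ A ∈ part j, MeasurableSet A
  disj : ∀ j, ∀ A ∈ part j, ∀ B ∈ part j, A ≠ B → Disjoint A B
  cover : ∀ j, ⋃₀ (↑(part j) : Set (Set Ω)) = Set.univ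
  pos : ∀ j, ∀ A ∈ part j, 0 < μ A
  splitSet : ℕ → Set Ω
  piece1 : ℕ → Set Ω
  piece2 : ℕ → Set Ω
  splitSet_mem : ∀ j, splitSet j ∈ part j
  union_pieces : ∀ j, piece1 j ∪ piece2 j = splitSet j
  disj_pieces : ∀ j, Disjoint (piece1 j) (piece2 j)
  part_succ : ∀ j, part (j + 1) =
    insert (piece1 j) (insert (piece2 j) ((part j).erase (splitSet j)))

/-- The σ-algebras of a Haar filtration. -/
def HaarSystem.salg {Ω : Type*} [m0 : MeasurableSpace Ω] {μ : Measure Ω}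
    (S : HaarSystem Ω μ) (j : ℕ) : MeasurableSpace Ω :=
  MeasurableSpace.generateFrom (↑(S.part j) : Set (Set Ω))

/-- A Haar filtration is dyadic if in each splitting the measure of each piece is a
dyadic fraction of the measure of the split set. -/
def HaarSystem.IsDyadic {Ω : Type*} [m0 : MeasurableSpace Ω] {μ : Measure Ω}
    (S : HaarSystem Ω μ) : Prop :=
  (∀ A ∈ S.part 0, ∃ m k : ℕ, μ A = (m : ℝ≥0∞) / 2 ^ k * μ Set.univ) ∧
  ∀ j, ∃ m k : ℕ, μ (S.piece1 j) = (m : ℝ≥0∞) / 2 ^ k * μ (S.splitSet j)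

/-- A Haar filtration is standard if each splitting is into two pieces of equal measure. -/
def HaarSystem.IsStandard {Ω : Type*} [m0 : MeasurableSpace Ω] {μ : Measure Ω}
    (S : HaarSystem Ω μ) : Prop :=
  (∀ A ∈ S.part 0, μ A = μ Set.univ / 2) ∧
  ∀ j, μ (S.piece1 j) = μ (S.splitSet j) / 2

/-- A filtration of finite sub-σ-algebras, given by finite generating partitions
into sets of positive measure. -/
structure PartitionFiltration (Ω : Type*) [m0 : MeasurableSpace Ω] (μ : Measure Ω) where
  part : ℕ → Finset (Set Ω)
  meas : ∀ j, ∀ A ∈ part j, MeasurableSet A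
  disj : ∀ j, ∀ A ∈ part j, ∀ B ∈ part j, A ≠ B → Disjoint A B
  cover : ∀ j, ⋃₀ (↑(part j) : Set (Set Ω)) = Set.univ
  pos : ∀ j, ∀ A ∈ part j, 0 < μ A
  mono : ∀ j, MeasurableSpace.generateFrom (↑(part j) : Set (Set Ω)) ≤
    MeasurableSpace.generateFrom (↑(part (j + 1)) : Set (Set Ω))

/-- The natural σ-algebra `σ(X_1, …, X_j)` of a process. -/
def natSig {𝒳 Ω : Type*} [NormedAddCommGroup 𝒳] (X : ℕ → Ω → 𝒳) (j : ℕ) :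
    MeasurableSpace Ω :=
  ⨆ i ∈ Set.Icc 1 j, MeasurableSpace.comap (X i) (borel 𝒳)

/-- `(X_j)_{j ≥ 1}` is a martingale (w.r.t. its natural filtration). -/
def IsMart {𝒳 : Type*} [NormedAddCommGroup 𝒳] [NormedSpace ℝ 𝒳] [CompleteSpace 𝒳]
    {Ω : Type*} [m0 : MeasurableSpace Ω] (μ : Measure Ω) (X : ℕ → Ω → 𝒳) : Prop :=
  (∀ j, 1 ≤ j → Integrable (X j) μ) ∧ (∀ j, 1 ≤ j → natSig X j ≤ m0) ∧
  ∀ j k, 1 ≤ j → j ≤ k → (μ[X k| natSig X j]) =ᵐ[μ] X j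

/-- `‖X‖_p = sup_{j ≥ 1} (𝔼 ‖X_j‖^p)^{1/p}`. -/
def martNorm {𝒳 : Type*} [NormedAddCommGroup 𝒳] {Ω : Type*} [m0 : MeasurableSpace Ω]
    (μ : Measure Ω) (X : ℕ → Ω → 𝒳) (p : ℝ≥0∞) : ℝ≥0∞ :=
  ⨆ j, ⨆ (_ : 1 ≤ j), eLpNorm (X j) p μ

/-- The Rademacher maximal function `X_R^* = 𝓡({X_j : j ≥ 1})` of a process. -/
def martR {𝒳 : Type*} [NormedAddCommGroup 𝒳] [NormedSpace ℝ 𝒳] {Ω : Type*}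
    (X : ℕ → Ω → 𝒳) (ω : Ω) : ℝ≥0∞ :=
  Rbound {y : 𝒳 | ∃ j, 1 ≤ j ∧ y = X j ω}

/-- Doob's maximal function `X^* = sup_{j ≥ 1} ‖X_j‖` of a process. -/
def martStar {𝒳 : Type*} [NormedAddCommGroup 𝒳] {Ω : Type*}
    (X : ℕ → Ω → 𝒳) (ω : Ω) : ℝ≥0∞ :=
  ⨆ j, ⨆ (_ : 1 ≤ j), (‖X j ω‖₊ : ℝ≥0∞)

/-- `𝒳` has weak RMF with constant `C`: every `L¹`-bounded martingale `X` in `𝒳`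
satisfies `ℙ(X_R^* > λ) ≤ (C/λ) ‖X‖₁`. -/
def WeakRMFConst (𝒳 : Type*) [NormedAddCommGroup 𝒳] [NormedSpace ℝ 𝒳]
    [CompleteSpace 𝒳] (C : ℝ) : Prop :=
  ∀ (Ω : Type u) (m0 : MeasurableSpace Ω) (μ : Measure Ω), IsProbabilityMeasure μ →
    ∀ X : ℕ → Ω → 𝒳, IsMart μ X → martNorm μ X 1 < ⊤ →
      ∀ lam : ℝ, 0 < lam →
        μ {ω | ENNReal.ofReal lam < martR X ω} ≤
          ENNReal.ofReal (C / lam) * martNorm μ X 1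

/-- A standard Haar martingale: a martingale whose natural filtration is a standard
Haar filtration. -/
def IsStdHaarMart {𝒳 : Type*} [NormedAddCommGroup 𝒳] [NormedSpace ℝ 𝒳] [CompleteSpace 𝒳]
    {Ω : Type*} [m0 : MeasurableSpace Ω] (μ : Measure Ω) (X : ℕ → Ω → 𝒳) : Prop :=
  IsMart μ X ∧ ∃ S : HaarSystem Ω μ, S.IsStandard ∧
    ∀ j, 1 ≤ j → natSig X j = S.salg (j - 1)

/-- A finite martingale `(X_j)_{j=1}^N`. -/
def IsFinMart {𝒳 : Type*} [NormedAddCommGroup 𝒳] [NormedSpace ℝ 𝒳] [CompleteSpace 𝒳]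
    {Ω : Type*} [m0 : MeasurableSpace Ω] (μ : Measure Ω) (X : ℕ → Ω → 𝒳) (N : ℕ) : Prop :=
  (∀ j, 1 ≤ j → j ≤ N → Integrable (X j) μ) ∧
  (∀ j, 1 ≤ j → j ≤ N → natSig X j ≤ m0) ∧
  ∀ j k, 1 ≤ j → j ≤ k → k ≤ N → (μ[X k| natSig X j]) =ᵐ[μ] X j

/-- A simple martingale `(X_j)_{j=1}^N`: a finite martingale all of whose random
variables take finitely many values. -/
def IsSimpleMart {𝒳 : Type*} [NormedAddCommGroup 𝒳] [NormedSpace ℝ 𝒳] [CompleteSpace 𝒳]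
    {Ω : Type*} [m0 : MeasurableSpace Ω] (μ : Measure Ω) (X : ℕ → Ω → 𝒳) (N : ℕ) : Prop :=
  IsFinMart μ X N ∧ ∀ j, 1 ≤ j → j ≤ N → (Set.range (X j)).Finite

/-- The (finite) set `{X_1(ω), …, X_k(ω)}`. -/
def martSet {𝒳 Ω : Type*} [DecidableEq 𝒳] (X : ℕ → Ω → 𝒳) (k : ℕ) (ω : Ω) : Finset 𝒳 :=
  (Finset.Icc 1 k).image fun i => X i ω

section RadAvgLemmas

variable {E : Type*} [NormedAddCommGroup E] [NormedSpace ℝ E]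

/-- The sign function associated to a choice of signs. -/
def sgn {N : ℕ} (ε : Fin N → Bool) (j : Fin N) : ℝ := if ε j then (1 : ℝ) else -1

lemma sgn_sq {N : ℕ} (ε : Fin N → Bool) (j : Fin N) : sgn ε j * sgn ε j = 1 := by
  unfold sgn; split <;> norm_num

lemma radAvg_def {N : ℕ} (x : Fin N → E) :
    radAvg x = (2 ^ N : ℝ)⁻¹ * ∑ ε : Fin N → Bool, ‖∑ j, sgn ε j • x j‖ ^ 2 := rfl

lemma radAvg_nonneg {N : ℕ} (x : Fin N → E) : 0 ≤ radAvg x := by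
  rw [radAvg_def]
  apply mul_nonneg (by positivity)
  exact Finset.sum_nonneg fun ε _ => by positivity

/-- `radAvg` of a family of multiples of a single vector. -/
lemma radAvg_smul_single {N : ℕ} (l : Fin N → ℝ) (x : E) :
    radAvg (fun j => l j • x) = ‖x‖ ^ 2 * radAvg l := by
  rw [radAvg_def, radAvg_def]
  have hterm : ∀ ε : Fin N → Bool,
      ‖∑ j, sgn ε j • (l j • x)‖ ^ 2 = ‖x‖ ^ 2 * ‖∑ j, sgn ε j • l j‖ ^ 2 := by
    intro ε
    have h1 : (∑ j, sgn ε j • (l j • x)) = (∑ j, sgn ε j • l j) • x := by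
      rw [Finset.sum_smul]
      congr 1; ext j; rw [smul_smul]; rfl
    rw [h1, norm_smul, mul_pow, Real.norm_eq_abs, sq_abs]
    ring
  rw [Finset.sum_congr rfl (fun ε _ => hterm ε), ← Finset.mul_sum]
  ring

/-- orthogonality of signs -/
lemma sgn_orth {N : ℕ} (j k : Fin N) (hjk : j ≠ k) :
    ∑ ε : Fin N → Bool, sgn ε j * sgn ε k = 0 := by
  apply Finset.sum_ninvolution (fun ε => Function.update ε k (!(ε k)))
  · intro ε
    have h1 : sgn (Function.update ε k (!(ε k))) j = sgn ε j := by
      unfold sgn; rw [Function.update_of_ne hjk]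
    have h2 : sgn (Function.update ε k (!(ε k))) k = - sgn ε k := by
      unfold sgn; rw [Function.update_self]; cases h : ε k <;> simp
    rw [h1, h2]; ring
  · intro ε _
    intro h
    have := congrFun h k
    rw [Function.update_self] at this
    exact (Bool.not_ne_self (ε k)) this
  · intro ε; exact Finset.mem_univ _
  · intro ε
    ext i
    by_cases hik : i = k
    · subst hik; simp
    · simp [Function.update_of_ne hik]

lemma card_bool_fun (N : ℕ) : (Finset.univ : Finset (Fin N → Bool)).card = 2 ^ N := by
  simp [Finset.card_univ]

/-- `radAvg` of a scalar family equals the sum of squares. -/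
lemma radAvg_scalar {N : ℕ} (l : Fin N → ℝ) : radAvg l = ∑ j, l j ^ 2 := by
  rw [radAvg_def]
  have hterm : ∀ ε : Fin N → Bool, ‖∑ j, sgn ε j • l j‖ ^ 2
      = ∑ j, ∑ k, (l j * l k) * (sgn ε j * sgn ε k) := by
    intro ε
    rw [Real.norm_eq_abs, sq_abs]
    have : (∑ j, sgn ε j • l j) ^ 2 = (∑ j, sgn ε j * l j) * (∑ k, sgn ε k * l k) := by
      rw [sq]; rfl
    rw [this, Finset.sum_mul_sum]
    congr 1; ext j; congr 1; ext k; ring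
  rw [Finset.sum_congr rfl (fun ε _ => hterm ε)]
  rw [Finset.sum_comm]
  have hj : ∀ j : Fin N, ∑ ε : Fin N → Bool, ∑ k, (l j * l k) * (sgn ε j * sgn ε k)
      = 2 ^ N * l j ^ 2 := by
    intro j
    rw [Finset.sum_comm]
    have hk : ∀ k : Fin N, ∑ ε : Fin N → Bool, (l j * l k) * (sgn ε j * sgn ε k)
        = if k = j then 2 ^ N * l j ^ 2 else 0 := by
      intro k
      by_cases hkj : k = j
      · subst hkj
        simp only [if_pos rfl]
        rw [← Finset.mul_sum]
        rw [Finset.sum_congr rfl (fun ε _ => sgn_sq ε k), Finset.sum_const, card_bool_fun]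
        simp [sq]; ring
      · simp only [if_neg hkj]
        rw [← Finset.mul_sum, sgn_orth j k (fun h => hkj h.symm), mul_zero]
    rw [Finset.sum_congr rfl (fun k _ => hk k), Finset.sum_ite_eq' Finset.univ j
      (fun _ => (2:ℝ) ^ N * l j ^ 2)]
    simp
  rw [Finset.sum_congr rfl (fun j _ => hj j), ← Finset.mul_sum]
  rw [← mul_assoc, inv_mul_cancel₀ (by positivity), one_mul]

/-- Minkowski-type inequality for `radAvg`. -/
lemma sqrt_radAvg_add_le {N : ℕ} (x y : Fin N → E) :
    Real.sqrt (radAvg (fun j => x j + y j)) ≤ Real.sqrt (radAvg x) + Real.sqrt (radAvg y) := by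
  classical
  set A := Real.sqrt (∑ ε : Fin N → Bool, ‖∑ j, sgn ε j • x j‖ ^ 2) with hA
  set B := Real.sqrt (∑ ε : Fin N → Bool, ‖∑ j, sgn ε j • y j‖ ^ 2) with hB
  have hA0 : 0 ≤ A := Real.sqrt_nonneg _
  have hB0 : 0 ≤ B := Real.sqrt_nonneg _
  have hAsq : A ^ 2 = ∑ ε : Fin N → Bool, ‖∑ j, sgn ε j • x j‖ ^ 2 :=
    Real.sq_sqrt (Finset.sum_nonneg fun ε _ => by positivity)
  have hBsq : B ^ 2 = ∑ ε : Fin N → Bool, ‖∑ j, sgn ε j • y j‖ ^ 2 :=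
    Real.sq_sqrt (Finset.sum_nonneg fun ε _ => by positivity)
  have key : ∑ ε : Fin N → Bool, ‖∑ j, sgn ε j • (x j + y j)‖ ^ 2 ≤ (A + B) ^ 2 := by
    have hsplit : ∀ ε : Fin N → Bool,
        ‖∑ j, sgn ε j • (x j + y j)‖ ^ 2 ≤
          (‖∑ j, sgn ε j • x j‖ + ‖∑ j, sgn ε j • y j‖) ^ 2 := by
      intro ε
      have : (∑ j, sgn ε j • (x j + y j)) = (∑ j, sgn ε j • x j) + ∑ j, sgn ε j • y j := by
        rw [← Finset.sum_add_distrib]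
        congr 1; ext j; rw [smul_add]
      rw [this]
      have h := norm_add_le (∑ j, sgn ε j • x j) (∑ j, sgn ε j • y j)
      exact pow_le_pow_left₀ (norm_nonneg _) h 2
    calc ∑ ε : Fin N → Bool, ‖∑ j, sgn ε j • (x j + y j)‖ ^ 2
        ≤ ∑ ε : Fin N → Bool, (‖∑ j, sgn ε j • x j‖ + ‖∑ j, sgn ε j • y j‖) ^ 2 :=
          Finset.sum_le_sum fun ε _ => hsplit ε
      _ = ∑ ε : Fin N → Bool, (‖∑ j, sgn ε j • x j‖^2 + 2 * (‖∑ j, sgn ε j • x j‖ * ‖∑ j, sgn ε j • y j‖) + ‖∑ j, sgn ε j • y j‖^2) := by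
          congr 1; ext ε; ring
      _ = A^2 + 2 * (∑ ε : Fin N → Bool, ‖∑ j, sgn ε j • x j‖ * ‖∑ j, sgn ε j • y j‖) + B^2 := by
          rw [Finset.sum_add_distrib, Finset.sum_add_distrib, hAsq, hBsq, Finset.mul_sum]
      _ ≤ A^2 + 2 * (A * B) + B^2 := by
          have hcs : (∑ ε : Fin N → Bool, ‖∑ j, sgn ε j • x j‖ * ‖∑ j, sgn ε j • y j‖) ≤ A * B := by
            have h2 := Finset.sum_mul_sq_le_sq_mul_sq Finset.univ
              (fun ε : Fin N → Bool => ‖∑ j, sgn ε j • x j‖)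
              (fun ε : Fin N → Bool => ‖∑ j, sgn ε j • y j‖)
            have hns : 0 ≤ ∑ ε : Fin N → Bool, ‖∑ j, sgn ε j • x j‖ * ‖∑ j, sgn ε j • y j‖ :=
              Finset.sum_nonneg fun ε _ => mul_nonneg (norm_nonneg _) (norm_nonneg _)
            have hsq : (∑ ε : Fin N → Bool, ‖∑ j, sgn ε j • x j‖ * ‖∑ j, sgn ε j • y j‖) ^ 2
                ≤ (A * B) ^ 2 := by rw [mul_pow, hAsq, hBsq]; exact h2
            exact le_of_pow_le_pow_left₀ two_ne_zero (mul_nonneg hA0 hB0) hsq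
          nlinarith
      _ = (A + B) ^ 2 := by ring
  have hc : radAvg (fun j => x j + y j) ≤ (2 ^ N : ℝ)⁻¹ * (A + B)^2 := by
    rw [radAvg_def]
    have h2 : (0:ℝ) ≤ (2 ^ N : ℝ)⁻¹ := by positivity
    exact mul_le_mul_of_nonneg_left key h2
  have : Real.sqrt (radAvg (fun j => x j + y j)) ≤ Real.sqrt ((2 ^ N : ℝ)⁻¹ * (A + B)^2) :=
    Real.sqrt_le_sqrt hc
  refine this.trans ?_
  rw [Real.sqrt_mul (by positivity), Real.sqrt_sq (by positivity)]
  have hxA : Real.sqrt (radAvg x) = Real.sqrt ((2 ^ N : ℝ)⁻¹) * A := by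
    rw [radAvg_def, Real.sqrt_mul (by positivity), hA]
  have hyB : Real.sqrt (radAvg y) = Real.sqrt ((2 ^ N : ℝ)⁻¹) * B := by
    rw [radAvg_def, Real.sqrt_mul (by positivity), hB]
  rw [hxA, hyB, ← mul_add]

end RadAvgLemmas

section RboundLemmas

variable {𝒳 : Type*} [NormedAddCommGroup 𝒳] [NormedSpace ℝ 𝒳]

lemma isRBound_weaken {S : Set 𝒳} {r r' : ℝ} (h : IsRBound S r) (hrr : r ≤ r') :
    IsRBound S r' := by
  refine ⟨h.1.trans hrr, fun N y l hy => ?_⟩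
  refine (h.2 N y l hy).trans ?_
  have : r ^ 2 ≤ r' ^ 2 := by nlinarith [h.1]
  exact mul_le_mul_of_nonneg_right this (radAvg_nonneg l)

lemma isRBound_mono {S T : Set 𝒳} {r : ℝ} (h : IsRBound T r) (hST : S ⊆ T) :
    IsRBound S r :=
  ⟨h.1, fun N y l hy => h.2 N y l (fun j => hST (hy j))⟩

lemma radAvg_fin_zero (x : Fin 0 → 𝒳) : radAvg x = 0 := by
  rw [radAvg_def]
  simp

lemma isRBound_empty : IsRBound (∅ : Set 𝒳) 0 := by
  refine ⟨le_refl 0, fun N y l hy => ?_⟩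
  match N with
  | 0 => rw [radAvg_fin_zero]; simp [radAvg_nonneg]
  | (n+1) => exact absurd (hy 0) (Set.notMem_empty _)

lemma isRBound_singleton (x : 𝒳) : IsRBound ({x} : Set 𝒳) ‖x‖ := by
  refine ⟨norm_nonneg x, fun N y l hy => ?_⟩
  have hyx : ∀ j, y j = x := fun j => hy j
  have : (fun j => l j • y j) = fun j => l j • x := by
    ext j; rw [hyx j]
  rw [this, radAvg_smul_single]

/-- Union bound for R-bounds. -/
lemma isRBound_union {S T : Set 𝒳} {r s : ℝ} (hS : IsRBound S r) (hT : IsRBound T s) :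
    IsRBound (S ∪ T) (r + s) := by
  classical
  rcases Set.eq_empty_or_nonempty S with hSe | ⟨s₀, hs₀⟩
  · subst hSe
    rw [Set.empty_union]
    exact isRBound_weaken hT (by linarith [hS.1])
  rcases Set.eq_empty_or_nonempty T with hTe | ⟨t₀, ht₀⟩
  · subst hTe
    rw [Set.union_empty]
    exact isRBound_weaken hS (by linarith [hT.1])
  refine ⟨add_nonneg hS.1 hT.1, fun N y l hy => ?_⟩
  set u : Fin N → 𝒳 := fun j => if y j ∈ S then l j • y j else 0 with hu
  set v : Fin N → 𝒳 := fun j => if y j ∈ S then 0 else l j • y j with hv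
  have huv : (fun j => l j • y j) = fun j => u j + v j := by
    ext j; by_cases hj : y j ∈ S <;> simp [hu, hv, hj]
  set lS : Fin N → ℝ := fun j => if y j ∈ S then l j else 0 with hlS
  set lT : Fin N → ℝ := fun j => if y j ∈ S then 0 else l j with hlT
  set yS : Fin N → 𝒳 := fun j => if y j ∈ S then y j else s₀ with hyS
  set yT : Fin N → 𝒳 := fun j => if y j ∈ S then t₀ else y j with hyT
  have hS2 : radAvg u ≤ r ^ 2 * radAvg lS := by
    have : u = fun j => lS j • yS j := by
      ext j; by_cases hj : y j ∈ S <;> simp [hu, hlS, hyS, hj]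
    rw [this]
    refine hS.2 N yS lS (fun j => ?_)
    by_cases hj : y j ∈ S <;> simp [hyS, hj, hs₀]
  have hT2 : radAvg v ≤ s ^ 2 * radAvg lT := by
    have : v = fun j => lT j • yT j := by
      ext j; by_cases hj : y j ∈ S <;> simp [hv, hlT, hyT, hj]
    rw [this]
    refine hT.2 N yT lT (fun j => ?_)
    by_cases hj : y j ∈ S
    · simp [hyT, hj, ht₀]
    · simp only [hyT, if_neg hj]; exact (hy j).resolve_left hj
  have hlS2 : radAvg lS ≤ radAvg l := by
    rw [radAvg_scalar, radAvg_scalar]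
    refine Finset.sum_le_sum fun j _ => ?_
    by_cases hj : y j ∈ S <;> simp [hlS, hj] <;> positivity
  have hlT2 : radAvg lT ≤ radAvg l := by
    rw [radAvg_scalar, radAvg_scalar]
    refine Finset.sum_le_sum fun j _ => ?_
    by_cases hj : y j ∈ S <;> simp [hlT, hj] <;> positivity
  have hmink := sqrt_radAvg_add_le u v
  have hu' : Real.sqrt (radAvg u) ≤ r * Real.sqrt (radAvg l) := by
    have h1 : radAvg u ≤ r ^ 2 * radAvg l :=
      hS2.trans (mul_le_mul_of_nonneg_left hlS2 (by positivity))
    have := Real.sqrt_le_sqrt h1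
    rwa [Real.sqrt_mul (by positivity), Real.sqrt_sq hS.1] at this
  have hv' : Real.sqrt (radAvg v) ≤ s * Real.sqrt (radAvg l) := by
    have h1 : radAvg v ≤ s ^ 2 * radAvg l :=
      hT2.trans (mul_le_mul_of_nonneg_left hlT2 (by positivity))
    have := Real.sqrt_le_sqrt h1
    rwa [Real.sqrt_mul (by positivity), Real.sqrt_sq hT.1] at this
  have key : Real.sqrt (radAvg (fun j => l j • y j)) ≤ (r + s) * Real.sqrt (radAvg l) := by
    rw [huv]
    calc Real.sqrt (radAvg (fun j => u j + v j)) ≤ Real.sqrt (radAvg u) + Real.sqrt (radAvg v) :=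
          hmink
      _ ≤ r * Real.sqrt (radAvg l) + s * Real.sqrt (radAvg l) := add_le_add hu' hv'
      _ = (r + s) * Real.sqrt (radAvg l) := by ring
  have h2 : radAvg (fun j => l j • y j) = Real.sqrt (radAvg (fun j => l j • y j)) ^ 2 :=
    (Real.sq_sqrt (radAvg_nonneg _)).symm
  rw [h2]
  calc Real.sqrt (radAvg (fun j => l j • y j)) ^ 2
      ≤ ((r + s) * Real.sqrt (radAvg l)) ^ 2 := by
        refine pow_le_pow_left₀ (Real.sqrt_nonneg _) key 2
    _ = (r + s) ^ 2 * radAvg l := by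
        rw [mul_pow, Real.sq_sqrt (radAvg_nonneg l)]

/-- Translation bound for R-bounds. -/
lemma isRBound_translate {S : Set 𝒳} {r : ℝ} (hS : IsRBound S r) (x : 𝒳) :
    IsRBound ((fun z => x + z) '' S) (‖x‖ + r) := by
  refine ⟨add_nonneg (norm_nonneg x) hS.1, fun N y l hy => ?_⟩
  classical
  choose z hz hzz using fun j => hy j
  set u : Fin N → 𝒳 := fun j => l j • x with hu
  set v : Fin N → 𝒳 := fun j => l j • z j with hv
  have huv : (fun j => l j • y j) = fun j => u j + v j := by
    ext j
    rw [hu, hv]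
    simp only
    rw [← hzz j, smul_add]
  have hu2 : radAvg u = ‖x‖ ^ 2 * radAvg l := radAvg_smul_single l x
  have hv2 : radAvg v ≤ r ^ 2 * radAvg l := hS.2 N z l hz
  have hu' : Real.sqrt (radAvg u) ≤ ‖x‖ * Real.sqrt (radAvg l) := by
    rw [hu2, Real.sqrt_mul (by positivity), Real.sqrt_sq (norm_nonneg x)]
  have hv' : Real.sqrt (radAvg v) ≤ r * Real.sqrt (radAvg l) := by
    have := Real.sqrt_le_sqrt hv2
    rwa [Real.sqrt_mul (by positivity), Real.sqrt_sq hS.1] at this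
  have key : Real.sqrt (radAvg (fun j => l j • y j)) ≤ (‖x‖ + r) * Real.sqrt (radAvg l) := by
    rw [huv]
    calc Real.sqrt (radAvg (fun j => u j + v j)) ≤ Real.sqrt (radAvg u) + Real.sqrt (radAvg v) :=
          sqrt_radAvg_add_le u v
      _ ≤ ‖x‖ * Real.sqrt (radAvg l) + r * Real.sqrt (radAvg l) := add_le_add hu' hv'
      _ = (‖x‖ + r) * Real.sqrt (radAvg l) := by ring
  have h2 : radAvg (fun j => l j • y j) = Real.sqrt (radAvg (fun j => l j • y j)) ^ 2 :=
    (Real.sq_sqrt (radAvg_nonneg _)).symm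
  rw [h2]
  calc Real.sqrt (radAvg (fun j => l j • y j)) ^ 2
      ≤ ((‖x‖ + r) * Real.sqrt (radAvg l)) ^ 2 :=
        pow_le_pow_left₀ (Real.sqrt_nonneg _) key 2
    _ = (‖x‖ + r) ^ 2 * radAvg l := by
        rw [mul_pow, Real.sq_sqrt (radAvg_nonneg l)]

lemma Rbound_le_ofReal {S : Set 𝒳} {r : ℝ} (h : IsRBound S r) :
    Rbound S ≤ ENNReal.ofReal r :=
  sInf_le ⟨r, h, rfl⟩

lemma Rbound_mono {S T : Set 𝒳} (h : S ⊆ T) : Rbound S ≤ Rbound T := by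
  refine sInf_le_sInf ?_
  rintro c ⟨r, hr, rfl⟩
  exact ⟨r, isRBound_mono hr h, rfl⟩

lemma exists_isRBound_of_Rbound_le {S : Set 𝒳} {a : ℝ} (ha : 0 ≤ a)
    (h : Rbound S ≤ ENNReal.ofReal a) {ε : ℝ} (hε : 0 < ε) :
    ∃ r : ℝ, IsRBound S r ∧ r ≤ a + ε := by
  have hlt : Rbound S < ENNReal.ofReal (a + ε) := by
    refine h.trans_lt ?_
    rw [ENNReal.ofReal_lt_ofReal_iff (by linarith)]
    linarith
  rw [Rbound, sInf_lt_iff] at hlt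
  obtain ⟨c, ⟨r, hr, rfl⟩, hc⟩ := hlt
  refine ⟨r, hr, ?_⟩
  have := (ENNReal.ofReal_lt_ofReal_iff (by linarith)).mp hc
  linarith

end RboundLemmas

section PartitionLemmas

variable {Ω : Type*}

/-- The σ-algebra of sets that respect a partition. -/
def partAlg (P : Set (Set Ω)) : MeasurableSpace Ω where
  MeasurableSet' s := ∀ A ∈ P, A ⊆ s ∨ Disjoint A s
  measurableSet_empty := fun A _ => Or.inr (by simp)
  measurableSet_compl := by
    intro s hs A hA
    rcases hs A hA with h | h
    · exact Or.inr (Set.disjoint_left.mpr fun a ha hc => hc (h ha))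
    · exact Or.inl fun a ha => Set.disjoint_left.mp h ha
  measurableSet_iUnion := by
    intro f hf A hA
    by_cases hex : ∃ n, A ⊆ f n
    · obtain ⟨n, hn⟩ := hex
      exact Or.inl (hn.trans (Set.subset_iUnion f n))
    · push_neg at hex
      refine Or.inr (Set.disjoint_iUnion_right.mpr fun n => ?_)
      exact (hf n A hA).resolve_left (hex n)

lemma measSet_partition {P : Set (Set Ω)}
    (hd : ∀ A ∈ P, ∀ B ∈ P, A ≠ B → Disjoint A B)
    {s : Set Ω} (hs : MeasurableSet[MeasurableSpace.generateFrom P] s) :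
    ∀ A ∈ P, A ⊆ s ∨ Disjoint A s := by
  have hle : MeasurableSpace.generateFrom P ≤ partAlg P := by
    refine MeasurableSpace.generateFrom_le fun t ht A hA => ?_
    by_cases hAt : A = t
    · exact Or.inl (le_of_eq hAt)
    · exact Or.inr (hd A hA t ht hAt)
  exact hle s hs

end PartitionLemmas

section HaarLemmas

variable {Ω : Type*} {m0 : MeasurableSpace Ω} {μ : Measure Ω}
variable {𝒳 : Type*} [NormedAddCommGroup 𝒳] [NormedSpace ℝ 𝒳] [CompleteSpace 𝒳]

namespace HaarSystem

lemma piece1_mem (S : HaarSystem Ω μ) (j : ℕ) : S.piece1 j ∈ S.part (j + 1) := by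
  rw [S.part_succ j]; exact Finset.mem_insert_self _ _

lemma piece2_mem (S : HaarSystem Ω μ) (j : ℕ) : S.piece2 j ∈ S.part (j + 1) := by
  rw [S.part_succ j]; exact Finset.mem_insert_of_mem (Finset.mem_insert_self _ _)

lemma mem_succ_of_ne_split (S : HaarSystem Ω μ) {j : ℕ} {B : Set Ω}
    (hB : B ∈ S.part j) (hne : B ≠ S.splitSet j) : B ∈ S.part (j + 1) := by
  rw [S.part_succ j]
  exact Finset.mem_insert_of_mem (Finset.mem_insert_of_mem (Finset.mem_erase.mpr ⟨hne, hB⟩))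

lemma refine_succ (S : HaarSystem Ω μ) {j : ℕ} {A : Set Ω} (hA : A ∈ S.part (j + 1)) :
    ∃ B ∈ S.part j, A ⊆ B := by
  rw [S.part_succ j] at hA
  rcases Finset.mem_insert.mp hA with h1 | hA'
  · exact ⟨S.splitSet j, S.splitSet_mem j, by
      rw [h1, ← S.union_pieces j]; exact Set.subset_union_left⟩
  rcases Finset.mem_insert.mp hA' with h2 | hA''
  · exact ⟨S.splitSet j, S.splitSet_mem j, by
      rw [h2, ← S.union_pieces j]; exact Set.subset_union_right⟩
  · exact ⟨A, Finset.mem_of_mem_erase hA'', le_refl _⟩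

lemma refine_le (S : HaarSystem Ω μ) {i : ℕ} : ∀ {m : ℕ}, i ≤ m → ∀ {A : Set Ω},
    A ∈ S.part m → ∃ B ∈ S.part i, A ⊆ B := by
  intro m
  induction m with
  | zero =>
    intro him A hA
    obtain rfl : i = 0 := Nat.le_zero.mp him
    exact ⟨A, hA, le_refl _⟩
  | succ n ih =>
    intro him A hA
    rcases Nat.lt_or_ge i (n + 1) with hlt | hge
    · obtain ⟨B, hB, hAB⟩ := S.refine_succ hA
      obtain ⟨B', hB', hBB'⟩ := ih (Nat.lt_succ_iff.mp hlt) hB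
      exact ⟨B', hB', hAB.trans hBB'⟩
    · have hieq : i = n + 1 := le_antisymm him hge
      subst hieq
      exact ⟨A, hA, le_refl _⟩

/-- The atom of the `n`-th Haar partition containing a point. -/
def atomOf (S : HaarSystem Ω μ) (n : ℕ) (ω : Ω) : Set Ω :=
  if h : ∃ A, A ∈ S.part n ∧ ω ∈ A then h.choose else ∅

lemma atomOf_exists (S : HaarSystem Ω μ) (n : ℕ) (ω : Ω) :
    ∃ A, A ∈ S.part n ∧ ω ∈ A := by
  have h : ω ∈ ⋃₀ (↑(S.part n) : Set (Set Ω)) := by rw [S.cover n]; trivial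
  obtain ⟨A, hA, hωA⟩ := h
  exact ⟨A, hA, hωA⟩

lemma atomOf_mem (S : HaarSystem Ω μ) (n : ℕ) (ω : Ω) : atomOf S n ω ∈ S.part n := by
  rw [atomOf, dif_pos (S.atomOf_exists n ω)]
  exact (S.atomOf_exists n ω).choose_spec.1

lemma mem_atomOf (S : HaarSystem Ω μ) (n : ℕ) (ω : Ω) : ω ∈ atomOf S n ω := by
  rw [atomOf, dif_pos (S.atomOf_exists n ω)]
  exact (S.atomOf_exists n ω).choose_spec.2

lemma atom_unique (S : HaarSystem Ω μ) {n : ℕ} {A B : Set Ω} (hA : A ∈ S.part n)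
    (hB : B ∈ S.part n) {ω : Ω} (hωA : ω ∈ A) (hωB : ω ∈ B) : A = B := by
  by_contra hne
  exact Set.disjoint_left.mp (S.disj n A hA B hB hne) hωA hωB

lemma atomOf_eq (S : HaarSystem Ω μ) {n : ℕ} {A : Set Ω} (hA : A ∈ S.part n) {ω : Ω}
    (hω : ω ∈ A) : atomOf S n ω = A :=
  S.atom_unique (S.atomOf_mem n ω) hA (S.mem_atomOf n ω) hω

lemma atomOf_refine (S : HaarSystem Ω μ) {i m : ℕ} (him : i ≤ m) {ω ω' : Ω}
    (hω' : ω' ∈ atomOf S m ω) : atomOf S i ω' = atomOf S i ω := by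
  obtain ⟨B, hB, hAB⟩ := S.refine_le him (S.atomOf_mem m ω)
  have h1 : atomOf S i ω = B := S.atomOf_eq hB (hAB (S.mem_atomOf m ω))
  have h2 : atomOf S i ω' = B := S.atomOf_eq hB (hAB hω')
  rw [h1, h2]

end HaarSystem

variable {X : ℕ → Ω → 𝒳}

/-- A martingale with natural Haar filtration is constant on the atoms. -/
lemma Xconst (S : HaarSystem Ω μ) (mart : IsMart μ X)
    (hnat : ∀ j, 1 ≤ j → natSig X j = S.salg (j - 1))
    {i n : ℕ} (h1 : 1 ≤ i) (hin : i ≤ n + 1) {A : Set Ω} (hA : A ∈ S.part n)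
    {ω ω' : Ω} (hω : ω ∈ A) (hω' : ω' ∈ A) : X i ω' = X i ω := by
  have hsing : MeasurableSet[borel 𝒳] ({X i ω} : Set 𝒳) := by
    have h := MeasurableSpace.measurableSet_generateFrom
      (s := {s : Set 𝒳 | IsOpen s}) (isOpen_compl_singleton : IsOpen ({X i ω}ᶜ))
    have h2 := h.compl
    rw [compl_compl] at h2
    exact h2
  have hpre : MeasurableSet[MeasurableSpace.comap (X i) (borel 𝒳)] ((X i) ⁻¹' {X i ω}) :=
    ⟨{X i ω}, hsing, rfl⟩
  have hle : MeasurableSpace.comap (X i) (borel 𝒳) ≤ natSig X i := by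
    have := le_iSup₂ (f := fun (i' : ℕ) (_ : i' ∈ Set.Icc 1 i) =>
      MeasurableSpace.comap (X i') (borel 𝒳)) i ⟨h1, le_refl i⟩
    exact this
  have hpre2 : MeasurableSet[S.salg (i - 1)] ((X i) ⁻¹' {X i ω}) := by
    rw [← hnat i h1]
    exact hle _ hpre
  -- B : atom of part (i-1) containing A
  obtain ⟨B, hB, hAB⟩ := S.refine_le (by omega : i - 1 ≤ n) hA
  have hchar := measSet_partition (P := (↑(S.part (i - 1)) : Set (Set Ω)))
    (fun A' hA' B' hB' hne => S.disj _ A' hA' B' hB' hne) hpre2 B hB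
  rcases hchar with hsub | hdisj
  · exact hsub (hAB hω')
  · exact (Set.disjoint_left.mp hdisj (hAB hω) rfl).elim

/-- Martingale property as an integral identity over atoms. -/
lemma intEq [IsProbabilityMeasure μ] (S : HaarSystem Ω μ) (mart : IsMart μ X)
    (hnat : ∀ j, 1 ≤ j → natSig X j = S.salg (j - 1))
    {m k : ℕ} (h1 : 1 ≤ m) (hk : m ≤ k) {A : Set Ω}
    (hA : MeasurableSet[S.salg (m - 1)] A) :
    ∫ ω in A, X k ω ∂μ = ∫ ω in A, X m ω ∂μ := by
  have hle : natSig X m ≤ m0 := mart.2.1 m h1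
  have hA' : MeasurableSet[natSig X m] A := by rw [hnat m h1]; exact hA
  have heq := mart.2.2 m k h1 hk
  calc ∫ ω in A, X k ω ∂μ = ∫ ω in A, (μ[X k| natSig X m]) ω ∂μ :=
        (setIntegral_condExp hle (mart.1 k (h1.trans hk)) hA').symm
    _ = ∫ ω in A, X m ω ∂μ := integral_congr_ae (ae_restrict_of_ae heq)

/-- The sibling value formula for a standard Haar martingale. -/
lemma sibling [IsProbabilityMeasure μ] (S : HaarSystem Ω μ) (hstd : S.IsStandard)
    (mart : IsMart μ X) (hnat : ∀ j, 1 ≤ j → natSig X j = S.salg (j - 1))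
    (n : ℕ) {ω₁ ω₂ : Ω} (h1 : ω₁ ∈ S.piece1 n) (h2 : ω₂ ∈ S.piece2 n) :
    X (n + 2) ω₁ + X (n + 2) ω₂ = (2 : ℝ) • X (n + 1) ω₁ := by
  set B := S.splitSet n with hBdef
  have hB : B ∈ S.part n := S.splitSet_mem n
  have hp1 : S.piece1 n ∈ S.part (n + 1) := S.piece1_mem n
  have hp2 : S.piece2 n ∈ S.part (n + 1) := S.piece2_mem n
  have hunion : S.piece1 n ∪ S.piece2 n = B := S.union_pieces n
  have hdisj : Disjoint (S.piece1 n) (S.piece2 n) := S.disj_pieces n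
  have hμ1 : μ (S.piece1 n) = μ B / 2 := hstd.2 n
  have hμB : μ B = μ (S.piece1 n) + μ (S.piece2 n) := by
    rw [← hunion]
    exact measure_union hdisj (S.meas (n + 1) _ hp2)
  have hμ2 : μ (S.piece2 n) = μ B / 2 := by
    have hsum : μ B / 2 + μ (S.piece2 n) = μ B := by rw [← hμ1]; exact hμB.symm
    have h2 : μ B / 2 + μ (S.piece2 n) = μ B / 2 + μ B / 2 := by
      rw [hsum, ENNReal.add_halves]
    exact (ENNReal.add_right_inj
      (ne_of_lt (lt_of_le_of_lt ENNReal.half_le_self (measure_lt_top μ B)))).mp h2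
  -- constants
  set a₁ := X (n + 2) ω₁ with ha₁
  set a₂ := X (n + 2) ω₂ with ha₂
  set b := X (n + 1) ω₁ with hb
  have hω₁B : ω₁ ∈ B := by rw [← hunion]; exact Set.mem_union_left _ h1
  have hint : Integrable (X (n + 2)) μ := mart.1 (n + 2) (by omega)
  have hI1 : ∫ ω in S.piece1 n, X (n + 2) ω ∂μ = (μ (S.piece1 n)).toReal • a₁ := by
    rw [setIntegral_congr_fun (S.meas (n+1) _ hp1)
      (fun ω hω => Xconst S mart hnat (by omega) (le_refl (n+2)) hp1 h1 hω), setIntegral_const, measureReal_def]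
  have hI2 : ∫ ω in S.piece2 n, X (n + 2) ω ∂μ = (μ (S.piece2 n)).toReal • a₂ := by
    rw [setIntegral_congr_fun (S.meas (n+1) _ hp2)
      (fun ω hω => Xconst S mart hnat (by omega) (le_refl (n+2)) hp2 h2 hω), setIntegral_const, measureReal_def]
  have hIB : ∫ ω in B, X (n + 1) ω ∂μ = (μ B).toReal • b := by
    rw [setIntegral_congr_fun (S.meas n _ hB)
      (fun ω hω => Xconst S mart hnat (by omega) (le_refl (n+1)) hB hω₁B hω), setIntegral_const, measureReal_def]
  have hsplit : ∫ ω in B, X (n + 2) ω ∂μ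
      = ∫ ω in S.piece1 n, X (n + 2) ω ∂μ + ∫ ω in S.piece2 n, X (n + 2) ω ∂μ := by
    rw [← hunion]
    exact setIntegral_union hdisj (S.meas (n+1) _ hp2) hint.integrableOn hint.integrableOn
  have hmart : ∫ ω in B, X (n + 2) ω ∂μ = ∫ ω in B, X (n + 1) ω ∂μ :=
    intEq S mart hnat (by omega : 1 ≤ n + 1) (by omega) (by
      show MeasurableSet[S.salg (n + 1 - 1)] B
      have : n + 1 - 1 = n := rfl
      rw [this]
      exact MeasurableSpace.measurableSet_generateFrom (Finset.mem_coe.mpr hB))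
  have hkey : (μ (S.piece1 n)).toReal • a₁ + (μ (S.piece2 n)).toReal • a₂ = (μ B).toReal • b := by
    rw [← hI1, ← hI2, ← hsplit, hmart, hIB]
  set t := (μ B).toReal with ht
  have htpos : 0 < t := ENNReal.toReal_pos (ne_of_gt (S.pos n B hB)) (measure_ne_top μ B)
  have ht1 : (μ (S.piece1 n)).toReal = t / 2 := by rw [hμ1, ENNReal.toReal_div]; norm_num; exact ht.symm
  have ht2 : (μ (S.piece2 n)).toReal = t / 2 := by rw [hμ2, ENNReal.toReal_div]; norm_num; exact ht.symm
  rw [ht1, ht2] at hkey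
  have hinj : Function.Injective (fun v : 𝒳 => (t / 2) • v) :=
    smul_right_injective 𝒳 (by positivity)
  apply hinj
  simp only
  rw [smul_add, hkey, smul_smul]
  have : t / 2 * 2 = t := by ring
  rw [this]

end HaarLemmas

section Dynamics

variable {Ω : Type*} {m0 : MeasurableSpace Ω} {μ : Measure Ω}
variable {𝒳 : Type*} [NormedAddCommGroup 𝒳] [NormedSpace ℝ 𝒳] [CompleteSpace 𝒳]

/-- The set `{X_1(ω), …, X_k(ω)}`. -/
def prefixSet (X : ℕ → Ω → 𝒳) (k : ℕ) (ω : Ω) : Set 𝒳 :=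
  {y | ∃ i, 1 ≤ i ∧ i ≤ k ∧ y = X i ω}

/-- The set of points where some finite prefix has R-bound exceeding `lam`. -/
def Dset (X : ℕ → Ω → 𝒳) (lam : ℝ) : Set Ω :=
  {ω | ∃ k, 1 ≤ k ∧ ENNReal.ofReal lam < Rbound (prefixSet X k ω)}

lemma mem_Dset {X : ℕ → Ω → 𝒳} {lam : ℝ} {ω : Ω} :
    ω ∈ Dset X lam ↔ ∃ k, 1 ≤ k ∧ ENNReal.ofReal lam < Rbound (prefixSet X k ω) :=
  Iff.rfl

/-- The first time the prefix R-bound exceeds `lam`. -/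
def tau (X : ℕ → Ω → 𝒳) (lam : ℝ) (ω : Ω) : ℕ :=
  if h : ∃ k, 1 ≤ k ∧ ENNReal.ofReal lam < Rbound (prefixSet X k ω) then Nat.find h else 0

lemma tau_spec {X : ℕ → Ω → 𝒳} {lam : ℝ} {ω : Ω} (hω : ω ∈ Dset X lam) :
    1 ≤ tau X lam ω ∧ ENNReal.ofReal lam < Rbound (prefixSet X (tau X lam ω) ω) := by
  rw [tau, dif_pos (mem_Dset.mp hω)]
  exact Nat.find_spec (mem_Dset.mp hω)

lemma tau_min {X : ℕ → Ω → 𝒳} {lam : ℝ} {ω : Ω} (hω : ω ∈ Dset X lam) {i : ℕ}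
    (hi : i < tau X lam ω) :
    ¬(1 ≤ i ∧ ENNReal.ofReal lam < Rbound (prefixSet X i ω)) := by
  rw [tau, dif_pos (mem_Dset.mp hω)] at hi
  exact Nat.find_min (mem_Dset.mp hω) hi

/-- The stopping trigger: some point of the current atom moves far at the next step. -/
def fire (S : HaarSystem Ω μ) (X : ℕ → Ω → 𝒳) (lam dl : ℝ) (i : ℕ) (ω : Ω) : Prop :=
  ∃ ω' ∈ HaarSystem.atomOf S (i - 1) ω, 4 * dl < ‖X (i + 1) ω' - X (tau X lam ω) ω‖

/-- The stopped index: `n` truncated at the first firing time. -/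
def stopIdx (S : HaarSystem Ω μ) (X : ℕ → Ω → 𝒳) (lam dl : ℝ) (n : ℕ) (ω : Ω) : ℕ :=
  if h : ∃ i, tau X lam ω ≤ i ∧ fire S X lam dl i ω then min n (Nat.find h) else n

/-- The stopped and restarted martingale. -/
def Ymart (S : HaarSystem Ω μ) (X : ℕ → Ω → 𝒳) (lam dl : ℝ) (j : ℕ) (ω : Ω) : 𝒳 :=
  if ω ∈ Dset X lam then
    X (stopIdx S X lam dl (tau X lam ω + j) ω) ω - X (tau X lam ω) ω
  else 0

/-- The atom (or complement of `Dset`) determining `Ymart j` near a point. -/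
def pieceOf (S : HaarSystem Ω μ) (X : ℕ → Ω → 𝒳) (lam dl : ℝ) (j : ℕ) (ω : Ω) : Set Ω :=
  if ω ∈ Dset X lam then
    HaarSystem.atomOf S (stopIdx S X lam dl (tau X lam ω + j) ω - 1) ω
  else (Dset X lam)ᶜ

variable {S : HaarSystem Ω μ} {X : ℕ → Ω → 𝒳} {lam dl : ℝ}

lemma stopIdx_le (n : ℕ) (ω : Ω) : stopIdx S X lam dl n ω ≤ n := by
  rw [stopIdx]
  split
  · exact min_le_left _ _
  · exact le_refl n

lemma tau_le_stopIdx {n : ℕ} (ω : Ω) (hn : tau X lam ω ≤ n) :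
    tau X lam ω ≤ stopIdx S X lam dl n ω := by
  rw [stopIdx]
  split
  · next h => exact le_min hn (Nat.find_spec h).1
  · exact hn

lemma stopIdx_mono {n n' : ℕ} (hnn : n ≤ n') (ω : Ω) :
    stopIdx S X lam dl n ω ≤ stopIdx S X lam dl n' ω := by
  rw [stopIdx, stopIdx]
  split
  · exact min_le_min hnn (le_refl _)
  · exact hnn

lemma stopIdx_eq_of_nofire {n : ℕ} {ω : Ω}
    (h : ∀ i, tau X lam ω ≤ i → i < n → ¬ fire S X lam dl i ω) :
    stopIdx S X lam dl n ω = n := by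
  rw [stopIdx]
  split
  · next hex =>
    have hf := Nat.find_spec hex
    have : n ≤ Nat.find hex := by
      by_contra hlt
      push_neg at hlt
      exact h _ hf.1 hlt hf.2
    exact min_eq_left this
  · rfl

lemma stopIdx_eq_of_fire {n i₀ : ℕ} {ω : Ω} (hi0 : tau X lam ω ≤ i₀)
    (hf : fire S X lam dl i₀ ω)
    (hmin : ∀ i, tau X lam ω ≤ i → i < i₀ → ¬ fire S X lam dl i ω) :
    stopIdx S X lam dl n ω = min n i₀ := by
  have hex : ∃ i, tau X lam ω ≤ i ∧ fire S X lam dl i ω := ⟨i₀, hi0, hf⟩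
  rw [stopIdx, dif_pos hex]
  congr 1
  refine le_antisymm (Nat.find_le ⟨hi0, hf⟩) ?_
  by_contra hlt
  push_neg at hlt
  have hsp := Nat.find_spec hex
  exact hmin _ hsp.1 hlt hsp.2

lemma prefixSet_zero (X : ℕ → Ω → 𝒳) (ω : Ω) : prefixSet X 0 ω = ∅ := by
  ext y
  simp only [prefixSet, Set.mem_setOf_eq, Set.mem_empty_iff_false, iff_false]
  rintro ⟨i, h1, h0, _⟩
  omega

section WithMart

variable (S)

lemma prefixSet_congr (mart : IsMart μ X)
    (hnat : ∀ j, 1 ≤ j → natSig X j = S.salg (j - 1)) {i n : ℕ} (hin : i ≤ n + 1) {ω ω' : Ω}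
    (hω' : ω' ∈ HaarSystem.atomOf S n ω) : prefixSet X i ω' = prefixSet X i ω := by
  have hA := S.atomOf_mem n ω
  have hω := S.mem_atomOf n ω
  ext y
  constructor
  · rintro ⟨i', h1, hi', rfl⟩
    exact ⟨i', h1, hi', (Xconst S mart hnat h1 (hi'.trans hin) hA hω hω')⟩
  · rintro ⟨i', h1, hi', rfl⟩
    exact ⟨i', h1, hi', (Xconst S mart hnat h1 (hi'.trans hin) hA hω' hω)⟩

lemma tau_congr (mart : IsMart μ X)
    (hnat : ∀ j, 1 ≤ j → natSig X j = S.salg (j - 1)) {n : ℕ} {ω ω' : Ω} (hω : ω ∈ Dset X lam) (ht : tau X lam ω ≤ n + 1)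
    (hω' : ω' ∈ HaarSystem.atomOf S n ω) : ω' ∈ Dset X lam ∧ tau X lam ω' = tau X lam ω := by
  obtain ⟨ht1, htR⟩ := tau_spec hω
  set t := tau X lam ω with htdef
  have hpre : prefixSet X t ω' = prefixSet X t ω := prefixSet_congr S mart hnat ht hω'
  have hmem' : ω' ∈ Dset X lam := ⟨t, ht1, by rw [hpre]; exact htR⟩
  refine ⟨hmem', ?_⟩
  have hle : tau X lam ω' ≤ t := by
    rw [tau, dif_pos (mem_Dset.mp hmem')]
    exact Nat.find_le ⟨ht1, by rw [hpre]; exact htR⟩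
  rcases Nat.lt_or_ge (tau X lam ω') t with hlt | hge
  · exfalso
    obtain ⟨ht1', htR'⟩ := tau_spec hmem'
    have hpre' : prefixSet X (tau X lam ω') ω' = prefixSet X (tau X lam ω') ω :=
      prefixSet_congr S mart hnat (by omega) hω'
    rw [hpre'] at htR'
    exact tau_min hω hlt ⟨ht1', htR'⟩
  · exact le_antisymm hle hge

lemma Xtau_congr (mart : IsMart μ X)
    (hnat : ∀ j, 1 ≤ j → natSig X j = S.salg (j - 1)) {n : ℕ} {ω ω' : Ω} (hω : ω ∈ Dset X lam) (ht : tau X lam ω ≤ n + 1)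
    (hω' : ω' ∈ HaarSystem.atomOf S n ω) :
    X (tau X lam ω') ω' = X (tau X lam ω) ω := by
  rw [(tau_congr S mart hnat hω ht hω').2]
  exact Xconst S mart hnat (tau_spec hω).1 ht (S.atomOf_mem n ω) (S.mem_atomOf n ω) hω'

lemma fire_congr (mart : IsMart μ X)
    (hnat : ∀ j, 1 ≤ j → natSig X j = S.salg (j - 1)) {i n : ℕ} {ω ω' : Ω} (hω : ω ∈ Dset X lam) (hti : tau X lam ω ≤ i)
    (hin : i ≤ n + 1) (hω' : ω' ∈ HaarSystem.atomOf S n ω) :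
    fire S X lam dl i ω' ↔ fire S X lam dl i ω := by
  have ht1 : 1 ≤ tau X lam ω := (tau_spec hω).1
  have hatom : HaarSystem.atomOf S (i - 1) ω' = HaarSystem.atomOf S (i - 1) ω :=
    S.atomOf_refine (by omega) hω'
  have hXt : X (tau X lam ω') ω' = X (tau X lam ω) ω :=
    Xtau_congr S mart hnat hω (hti.trans hin) hω'
  rw [fire, fire, hatom, hXt]

lemma stopIdx_congr (mart : IsMart μ X)
    (hnat : ∀ j, 1 ≤ j → natSig X j = S.salg (j - 1)) {i j : ℕ} (hij : i ≤ j) {ω ω' : Ω} (hω : ω ∈ Dset X lam)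
    (hω' : ω' ∈ HaarSystem.atomOf S (stopIdx S X lam dl (tau X lam ω + j) ω - 1) ω) :
    stopIdx S X lam dl (tau X lam ω' + i) ω' = stopIdx S X lam dl (tau X lam ω + i) ω := by
  set t := tau X lam ω with htdef
  set m := stopIdx S X lam dl (t + j) ω with hmdef
  have ht1 : 1 ≤ t := (tau_spec hω).1
  have htm : t ≤ m := tau_le_stopIdx ω (Nat.le_add_right t j)
  have hm1 : m - 1 + 1 = m := by omega
  have htau' : tau X lam ω' = t := by
    have := tau_congr S mart hnat hω (by omega : t ≤ m - 1 + 1) hω'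
    exact this.2
  have hpat : ∀ i', t ≤ i' → i' ≤ m →
      (fire S X lam dl i' ω' ↔ fire S X lam dl i' ω) := by
    intro i' h1 h2
    exact fire_congr S mart hnat hω h1 (by omega) hω'
  rw [htau']
  by_cases hB : ∃ i', t ≤ i' ∧ fire S X lam dl i' ω ∧ i' < t + i
  · -- a fire happens before time t+i
    have hex : ∃ i', t ≤ i' ∧ fire S X lam dl i' ω := by
      obtain ⟨i', h1, h2, _⟩ := hB
      exact ⟨i', h1, h2⟩
    set f := Nat.find hex with hfdef
    have hfsp := Nat.find_spec hex
    have hflt : f < t + i := by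
      obtain ⟨i', h1, h2, h3⟩ := hB
      exact lt_of_le_of_lt (Nat.find_le ⟨h1, h2⟩) h3
    have hmf : m = f := by
      rw [hmdef, stopIdx, dif_pos hex]
      have : f ≤ t + j := by omega
      rw [← hfdef]
      exact min_eq_right this
    have hfmin : ∀ i'', t ≤ i'' → i'' < f → ¬ fire S X lam dl i'' ω := by
      intro i'' h1 h2 hf
      exact Nat.find_min hex h2 ⟨h1, hf⟩
    have hstopω : stopIdx S X lam dl (t + i) ω = min (t + i) f := by
      rw [stopIdx, dif_pos hex, ← hfdef]
    have hfire' : fire S X lam dl f ω' := (hpat f hfsp.1 (le_of_eq hmf.symm)).mpr hfsp.2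
    have hmin' : ∀ i'', tau X lam ω' ≤ i'' → i'' < f → ¬ fire S X lam dl i'' ω' := by
      intro i'' h1 h2 hf
      rw [htau'] at h1
      exact hfmin i'' h1 h2 ((hpat i'' h1 (by omega)).mp hf)
    have hst' := stopIdx_eq_of_fire (n := t + i) (by rw [htau']; exact hfsp.1) hfire' hmin'
    rw [hst', hstopω]
  · -- no fire strictly before t+i
    push_neg at hB
    have hnof : ∀ i', t ≤ i' → i' < t + i → ¬ fire S X lam dl i' ω := by
      intro i' h1 h2 hf
      have := hB i' h1 hf
      omega
    have hstopω : stopIdx S X lam dl (t + i) ω = t + i := stopIdx_eq_of_nofire hnof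
    have htim : t + i ≤ m := by
      calc t + i = stopIdx S X lam dl (t + i) ω := hstopω.symm
        _ ≤ m := stopIdx_mono (by omega) ω
    have hnof' : ∀ i', tau X lam ω' ≤ i' → i' < t + i → ¬ fire S X lam dl i' ω' := by
      intro i' h1 h2 hf
      rw [htau'] at h1
      exact hnof i' h1 h2 ((hpat i' h1 (by omega)).mp hf)
    have hstopω' : stopIdx S X lam dl (t + i) ω' = t + i := by
      have := stopIdx_eq_of_nofire (n := t + i) hnof'
      exact this
    rw [hstopω, hstopω']

end WithMart

lemma stopIdx_nofire_below {n : ℕ} {ω : Ω} {i : ℕ} (hti : tau X lam ω ≤ i)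
    (hi : i < stopIdx S X lam dl n ω) : ¬ fire S X lam dl i ω := by
  intro hf
  have hex : ∃ i', tau X lam ω ≤ i' ∧ fire S X lam dl i' ω := ⟨i, hti, hf⟩
  rw [stopIdx, dif_pos hex] at hi
  have h1 : Nat.find hex ≤ i := Nat.find_le ⟨hti, hf⟩
  omega

lemma Ymart_norm_le (hdl : 0 ≤ dl) (j : ℕ) (ω : Ω) :
    ‖Ymart S X lam dl j ω‖ ≤ 4 * dl := by
  rw [Ymart]
  split
  · next hD =>
    set t := tau X lam ω with htdef
    set ρ := stopIdx S X lam dl (t + j) ω with hρdef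
    have ht1 : 1 ≤ t := (tau_spec hD).1
    have htρ : t ≤ ρ := tau_le_stopIdx ω (Nat.le_add_right t j)
    rcases eq_or_lt_of_le htρ with heq | hlt
    · rw [← heq]
      simp [hdl]
    · have hnf : ¬ fire S X lam dl (ρ - 1) ω :=
        stopIdx_nofire_below (n := t + j) (by omega) (by omega)
      rw [fire] at hnf
      push_neg at hnf
      have := hnf ω (S.mem_atomOf (ρ - 1 - 1) ω)
      have hρ1 : ρ - 1 + 1 = ρ := by omega
      rw [hρ1] at this
      linarith
  · simp
    linarith

section WithMart2

variable (S)

lemma Ymart_congr (mart : IsMart μ X)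
    (hnat : ∀ j, 1 ≤ j → natSig X j = S.salg (j - 1)) {i j : ℕ} (hij : i ≤ j) {ω ω' : Ω}
    (hω : ω ∈ Dset X lam)
    (hω' : ω' ∈ HaarSystem.atomOf S (stopIdx S X lam dl (tau X lam ω + j) ω - 1) ω) :
    Ymart S X lam dl i ω' = Ymart S X lam dl i ω := by
  set t := tau X lam ω with htdef
  set m := stopIdx S X lam dl (t + j) ω with hmdef
  have ht1 : 1 ≤ t := (tau_spec hω).1
  have htm : t ≤ m := tau_le_stopIdx ω (Nat.le_add_right t j)
  obtain ⟨hD', htau'⟩ := tau_congr S mart hnat hω (by omega : t ≤ m - 1 + 1) hω'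
  have hst : stopIdx S X lam dl (tau X lam ω' + i) ω' = stopIdx S X lam dl (t + i) ω :=
    stopIdx_congr S mart hnat hij hω hω'
  set m' := stopIdx S X lam dl (t + i) ω with hm'def
  have htm' : t ≤ m' := tau_le_stopIdx ω (Nat.le_add_right t i)
  have hm'm : m' ≤ m := stopIdx_mono (by omega) ω
  have hXm' : X m' ω' = X m' ω :=
    Xconst S mart hnat (by omega) (by omega) (S.atomOf_mem (m - 1) ω)
      (S.mem_atomOf (m - 1) ω) hω'
  have hXt : X t ω' = X t ω :=
    Xconst S mart hnat ht1 (by omega) (S.atomOf_mem (m - 1) ω) (S.mem_atomOf (m - 1) ω) hω'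
  rw [Ymart, if_pos hD', Ymart, if_pos hω, hst, htau', ← htdef, ← hm'def, hXm', hXt]

lemma mem_pieceOf_self (j : ℕ) (ω : Ω) : ω ∈ pieceOf S X lam dl j ω := by
  rw [pieceOf]
  split
  · exact S.mem_atomOf _ ω
  · next h => exact h

lemma pieceOf_mem_or (j : ℕ) (ω : Ω) :
    (∃ n, pieceOf S X lam dl j ω ∈ S.part n) ∨ pieceOf S X lam dl j ω = (Dset X lam)ᶜ := by
  rw [pieceOf]
  split
  · exact Or.inl ⟨_, S.atomOf_mem _ ω⟩
  · exact Or.inr rfl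

lemma pieceOf_congr (mart : IsMart μ X)
    (hnat : ∀ j, 1 ≤ j → natSig X j = S.salg (j - 1)) {j : ℕ} {ω ω' : Ω}
    (hω' : ω' ∈ pieceOf S X lam dl j ω) :
    pieceOf S X lam dl j ω' = pieceOf S X lam dl j ω := by
  by_cases hD : ω ∈ Dset X lam
  · rw [pieceOf, if_pos hD] at hω'
    set t := tau X lam ω with htdef
    set m := stopIdx S X lam dl (t + j) ω with hmdef
    have ht1 : 1 ≤ t := (tau_spec hD).1
    have htm : t ≤ m := tau_le_stopIdx ω (Nat.le_add_right t j)
    obtain ⟨hD', htau'⟩ := tau_congr S mart hnat hD (by omega : t ≤ m - 1 + 1) hω'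
    have hst : stopIdx S X lam dl (tau X lam ω' + j) ω' = m :=
      stopIdx_congr S mart hnat (le_refl j) hD hω'
    rw [pieceOf, if_pos hD', pieceOf, if_pos hD, hst]
    exact S.atomOf_eq (S.atomOf_mem (m - 1) ω) hω'
  · rw [pieceOf, if_neg hD] at hω'
    rw [pieceOf, if_neg hω', pieceOf, if_neg hD]

lemma Ymart_eq_on_piece (mart : IsMart μ X)
    (hnat : ∀ j, 1 ≤ j → natSig X j = S.salg (j - 1)) {i j : ℕ} (hij : i ≤ j) {ω ω' : Ω}
    (hω' : ω' ∈ pieceOf S X lam dl j ω) :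
    Ymart S X lam dl i ω' = Ymart S X lam dl i ω := by
  by_cases hD : ω ∈ Dset X lam
  · rw [pieceOf, if_pos hD] at hω'
    exact Ymart_congr S mart hnat hij hD hω'
  · rw [pieceOf, if_neg hD] at hω'
    rw [Ymart, if_neg hω', Ymart, if_neg hD]

lemma meas_of_const_on_atoms {s : Set Ω} (n : ℕ)
    (hconst : ∀ ω ∈ s, HaarSystem.atomOf S n ω ⊆ s) : MeasurableSet s := by
  have hs : s = ⋃₀ {A : Set Ω | A ∈ (↑(S.part n) : Set (Set Ω)) ∧ A ⊆ s} := by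
    ext ω
    constructor
    · intro hω
      exact ⟨HaarSystem.atomOf S n ω,
        ⟨Finset.mem_coe.mpr (S.atomOf_mem n ω), hconst ω hω⟩, S.mem_atomOf n ω⟩
    · rintro ⟨A, ⟨_, hAs⟩, hωA⟩
      exact hAs hωA
  rw [hs]
  refine Set.Finite.measurableSet_sUnion
    ((Finset.finite_toSet (S.part n)).subset fun A hA => hA.1) ?_
  rintro A ⟨hA, _⟩
  exact S.meas n A (Finset.mem_coe.mp hA)

lemma Dset_measurable (mart : IsMart μ X)
    (hnat : ∀ j, 1 ≤ j → natSig X j = S.salg (j - 1)) :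
    MeasurableSet (Dset X lam) := by
  have hD : Dset X lam =
      ⋃ k, {ω | 1 ≤ k ∧ ENNReal.ofReal lam < Rbound (prefixSet X k ω)} := by
    ext ω
    simp only [Dset, Set.mem_setOf_eq, Set.mem_iUnion]
  rw [hD]
  refine MeasurableSet.iUnion fun k => ?_
  match k with
  | 0 =>
    convert MeasurableSet.empty
    ext ω
    simp
  | (n + 1) =>
    refine meas_of_const_on_atoms S n fun ω hω ω'' hω'' => ?_
    obtain ⟨h1, h2⟩ := hω
    refine ⟨h1, ?_⟩
    rw [prefixSet_congr S mart hnat (le_refl (n + 1)) hω'']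
    exact h2

lemma pieceOf_measurable (mart : IsMart μ X)
    (hnat : ∀ j, 1 ≤ j → natSig X j = S.salg (j - 1)) (j : ℕ) (ω : Ω) :
    MeasurableSet (pieceOf S X lam dl j ω) := by
  rcases pieceOf_mem_or (X := X) (lam := lam) (dl := dl) S j ω with ⟨n, hn⟩ | heq
  · exact S.meas n _ hn
  · rw [heq]
    exact (Dset_measurable S mart hnat).compl

lemma pieceOf_range_countable (j : ℕ) :
    {q : Set Ω | ∃ ω, q = pieceOf S X lam dl j ω}.Countable := by
  have hsub : {q : Set Ω | ∃ ω, q = pieceOf S X lam dl j ω} ⊆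
      insert ((Dset X lam)ᶜ) (⋃ n, (↑(S.part n) : Set (Set Ω))) := by
    rintro q ⟨ω, rfl⟩
    rcases pieceOf_mem_or (X := X) (lam := lam) (dl := dl) S j ω with ⟨n, hn⟩ | heq
    · exact Set.mem_insert_of_mem _ (Set.mem_iUnion.mpr ⟨n, Finset.mem_coe.mpr hn⟩)
    · rw [heq]; exact Set.mem_insert _ _
  exact Set.Countable.mono hsub
    ((Set.countable_iUnion fun n => (S.part n).countable_toSet).insert _)

lemma Ymart_measurable' (mart : IsMart μ X)
    (hnat : ∀ j, 1 ≤ j → natSig X j = S.salg (j - 1)) (j : ℕ) (tset : Set 𝒳) :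
    MeasurableSet (Ymart S X lam dl j ⁻¹' tset) := by
  have hpre : Ymart S X lam dl j ⁻¹' tset =
      ⋃₀ {q : Set Ω | (∃ ω, q = pieceOf S X lam dl j ω ∧ Ymart S X lam dl j ω ∈ tset)} := by
    ext ω'
    constructor
    · intro hω'
      exact ⟨pieceOf S X lam dl j ω', ⟨ω', rfl, hω'⟩, mem_pieceOf_self S j ω'⟩
    · rintro ⟨q, ⟨ω, rfl, hωt⟩, hω'q⟩
      have := Ymart_eq_on_piece S mart hnat (le_refl j) hω'q
      simp only [Set.mem_preimage]
      rw [this]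
      exact hωt
  rw [hpre]
  refine MeasurableSet.sUnion ?_ ?_
  · refine Set.Countable.mono ?_ (pieceOf_range_countable (X := X) (lam := lam) (dl := dl) S j)
    rintro q ⟨ω, rfl, _⟩
    exact ⟨ω, rfl⟩
  · rintro q ⟨ω, rfl, _⟩
    exact pieceOf_measurable S mart hnat j ω

lemma range_X_countable (mart : IsMart μ X)
    (hnat : ∀ j, 1 ≤ j → natSig X j = S.salg (j - 1)) {i : ℕ} (hi : 1 ≤ i) :
    (Set.range (X i)).Countable := by
  have hsub : Set.range (X i) ⊆ ⋃ A ∈ (↑(S.part (i - 1)) : Set (Set Ω)), X i '' A := by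
    rintro y ⟨ω, rfl⟩
    exact Set.mem_biUnion (Finset.mem_coe.mpr (S.atomOf_mem (i - 1) ω))
      ⟨ω, S.mem_atomOf (i - 1) ω, rfl⟩
  refine Set.Countable.mono hsub ?_
  refine Set.Countable.biUnion (S.part (i - 1)).countable_toSet fun A hA => ?_
  refine Set.Subsingleton.countable ?_
  rintro y ⟨ω1, hω1, rfl⟩ y' ⟨ω2, hω2, rfl⟩
  exact (Xconst S mart hnat hi (by omega) (Finset.mem_coe.mp hA) hω2 hω1).symm ▸
    (Xconst S mart hnat hi (by omega) (Finset.mem_coe.mp hA) hω2 hω1) ▸ rfl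

lemma range_Ymart_countable (mart : IsMart μ X)
    (hnat : ∀ j, 1 ≤ j → natSig X j = S.salg (j - 1)) (j : ℕ) :
    (Set.range (Ymart S X lam dl j)).Countable := by
  have hsub : Set.range (Ymart S X lam dl j) ⊆
      insert (0 : 𝒳) (⋃ (m : ℕ), ⋃ (t' : ℕ),
        (fun p : 𝒳 × 𝒳 => p.1 - p.2) '' ((Set.range (X (m + 1))) ×ˢ (Set.range (X (t' + 1))))) := by
    rintro y ⟨ω, rfl⟩
    rw [Ymart]
    split
    · next hD =>
      have ht1 : 1 ≤ tau X lam ω := (tau_spec hD).1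
      have htρ : tau X lam ω ≤ stopIdx S X lam dl (tau X lam ω + j) ω :=
        tau_le_stopIdx ω (Nat.le_add_right _ j)
      refine Set.mem_insert_of_mem _ ?_
      refine Set.mem_iUnion.mpr ⟨stopIdx S X lam dl (tau X lam ω + j) ω - 1, ?_⟩
      refine Set.mem_iUnion.mpr ⟨tau X lam ω - 1, ?_⟩
      have h1 : stopIdx S X lam dl (tau X lam ω + j) ω - 1 + 1
          = stopIdx S X lam dl (tau X lam ω + j) ω := by omega
      have h2 : tau X lam ω - 1 + 1 = tau X lam ω := by omega
      rw [h1, h2]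
      exact ⟨(X (stopIdx S X lam dl (tau X lam ω + j) ω) ω, X (tau X lam ω) ω),
        ⟨⟨ω, rfl⟩, ⟨ω, rfl⟩⟩, rfl⟩
    · exact Set.mem_insert _ _
  refine Set.Countable.mono hsub ?_
  refine Set.Countable.insert _ ?_
  refine Set.countable_iUnion fun m => ?_
  refine Set.countable_iUnion fun t' => ?_
  exact Set.Countable.image
    ((range_X_countable S mart hnat (by omega)).prod
      (range_X_countable S mart hnat (by omega))) _

lemma Ymart_stronglyMeasurable (mart : IsMart μ X)
    (hnat : ∀ j, 1 ≤ j → natSig X j = S.salg (j - 1)) (j : ℕ) :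
    StronglyMeasurable (Ymart S X lam dl j) := by
  letI : MeasurableSpace 𝒳 := borel 𝒳
  haveI : BorelSpace 𝒳 := ⟨rfl⟩
  refine stronglyMeasurable_iff_measurable_separable.mpr
    ⟨fun tset _ => Ymart_measurable' S mart hnat j tset,
      (range_Ymart_countable S mart hnat j).isSeparable⟩

lemma Ymart_integrable [IsProbabilityMeasure μ] (mart : IsMart μ X)
    (hnat : ∀ j, 1 ≤ j → natSig X j = S.salg (j - 1)) (hdl : 0 ≤ dl) (j : ℕ) :
    Integrable (Ymart S X lam dl j) μ := by
  refine Integrable.mono' (integrable_const (4 * dl))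
    (Ymart_stronglyMeasurable S mart hnat j).aestronglyMeasurable ?_
  exact Filter.Eventually.of_forall (Ymart_norm_le hdl j)

end WithMart2

section WithMart3

variable (S)

/-- Optional stopping over atoms: the stopped process has the same atom averages. -/
lemma optStop [IsProbabilityMeasure μ] (mart : IsMart μ X)
    (hnat : ∀ j, 1 ≤ j → natSig X j = S.salg (j - 1)) (hdl : 0 ≤ dl) :
    ∀ (d n : ℕ) (B : Set Ω), B ∈ S.part n → B ⊆ Dset X lam →
      ∀ t, 1 ≤ t → t ≤ n + 1 → (∀ ω ∈ B, tau X lam ω = t) →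
      (∀ ω ∈ B, ∀ i, t ≤ i → i ≤ n → ¬ fire S X lam dl i ω) →
      ∫ ω in B, X (stopIdx S X lam dl (n + d + 1) ω) ω ∂μ = ∫ ω in B, X (n + 1) ω ∂μ := by
  intro d
  induction d with
  | zero =>
    intro n B hB hBD t ht1 htn htau hnof
    refine setIntegral_congr_fun (S.meas n B hB) fun ω hω => ?_
    have hstop : stopIdx S X lam dl (n + 0 + 1) ω = n + 0 + 1 :=
      stopIdx_eq_of_nofire fun i h1 h2 =>
        hnof ω hω i (by rw [htau ω hω] at h1; exact h1) (by omega)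
    simp only [hstop]
  | succ d ih =>
    intro n B hB hBD t ht1 htn htau hnof
    obtain ⟨ω₀, hω₀⟩ := nonempty_of_measure_ne_zero (ne_of_gt (S.pos n B hB))
    have hatomB : ∀ ω ∈ B, HaarSystem.atomOf S n ω = B := fun ω hω => S.atomOf_eq hB hω
    by_cases hf : fire S X lam dl (n + 1) ω₀
    · -- the process stops at time n+1 on all of B
      refine setIntegral_congr_fun (S.meas n B hB) fun ω hω => ?_
      have hfω : fire S X lam dl (n + 1) ω :=
        (fire_congr S mart hnat (hBD hω) (by rw [htau ω hω]; omega) (le_refl (n + 1))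
          (by rw [hatomB ω hω]; exact hω₀)).mp hf
      have hstop : stopIdx S X lam dl (n + (d + 1) + 1) ω = n + 1 := by
        have hh := stopIdx_eq_of_fire (n := n + (d + 1) + 1) (i₀ := n + 1)
          (by rw [htau ω hω]; omega) hfω
          (fun i h1 h2 => hnof ω hω i (by rw [htau ω hω] at h1; exact h1) (by omega))
        rw [hh]
        exact min_eq_right (by omega)
      simp only [hstop]
    · -- no fire at time n+1 anywhere on B
      have hnof' : ∀ ω ∈ B, ∀ i, t ≤ i → i ≤ n + 1 → ¬ fire S X lam dl i ω := by
        intro ω hω i h1 h2 hfi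
        rcases Nat.lt_or_ge i (n + 1) with hlt | hge
        · exact hnof ω hω i h1 (by omega) hfi
        · have hieq : i = n + 1 := by omega
          subst hieq
          exact hf ((fire_congr S mart hnat (hBD hω) (by rw [htau ω hω]; omega)
            (le_refl (n + 1)) (by rw [hatomB ω hω]; exact hω₀)).mpr hfi)
      have harith : n + (d + 1) + 1 = (n + 1) + d + 1 := by omega
      rw [harith]
      have hmart2 : ∫ ω in B, X (n + 2) ω ∂μ = ∫ ω in B, X (n + 1) ω ∂μ :=
        intEq S mart hnat (by omega : 1 ≤ n + 1) (by omega : n + 1 ≤ n + 2)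
          (MeasurableSpace.measurableSet_generateFrom (Finset.mem_coe.mpr hB))
      by_cases hsplit : B = S.splitSet n
      · -- B splits into two pieces
        set p1 := S.piece1 n with hp1def
        set p2 := S.piece2 n with hp2def
        have hp1 : p1 ∈ S.part (n + 1) := S.piece1_mem n
        have hp2 : p2 ∈ S.part (n + 1) := S.piece2_mem n
        have hunion : p1 ∪ p2 = B := by rw [hsplit]; exact S.union_pieces n
        have hdisj : Disjoint p1 p2 := S.disj_pieces n
        have hsub1 : p1 ⊆ B := by rw [← hunion]; exact Set.subset_union_left
        have hsub2 : p2 ⊆ B := by rw [← hunion]; exact Set.subset_union_right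
        have hIOn : ∀ (q : Set Ω), q ⊆ B → q ∈ S.part (n + 1) →
            IntegrableOn (fun ω => X (stopIdx S X lam dl ((n + 1) + d + 1) ω) ω) q μ := by
          intro q hqB hq
          set k := (n + 1) + d + 1 - t with hkdef
          have hIg : Integrable (fun ω => Ymart S X lam dl k ω + X t ω) μ :=
            (Ymart_integrable S mart hnat hdl k).add (mart.1 t ht1)
          refine (hIg.integrableOn).congr_fun ?_ (S.meas (n + 1) q hq)
          intro ω hω
          have hωB : ω ∈ B := hqB hω
          have hτ : tau X lam ω = t := htau ω hωB
          have htk : t + k = (n + 1) + d + 1 := by omega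
          simp only [Ymart, if_pos (hBD hωB), hτ, htk]
          abel
        have hstep1 : ∫ ω in p1, X (stopIdx S X lam dl ((n + 1) + d + 1) ω) ω ∂μ
            = ∫ ω in p1, X (n + 2) ω ∂μ :=
          ih (n + 1) p1 hp1 (hsub1.trans hBD) t ht1 (by omega)
            (fun ω hω => htau ω (hsub1 hω))
            (fun ω hω i h1 h2 => hnof' ω (hsub1 hω) i h1 h2)
        have hstep2 : ∫ ω in p2, X (stopIdx S X lam dl ((n + 1) + d + 1) ω) ω ∂μ
            = ∫ ω in p2, X (n + 2) ω ∂μ :=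
          ih (n + 1) p2 hp2 (hsub2.trans hBD) t ht1 (by omega)
            (fun ω hω => htau ω (hsub2 hω))
            (fun ω hω i h1 h2 => hnof' ω (hsub2 hω) i h1 h2)
        have hint2 : Integrable (X (n + 2)) μ := mart.1 (n + 2) (by omega)
        calc ∫ ω in B, X (stopIdx S X lam dl ((n + 1) + d + 1) ω) ω ∂μ
            = ∫ ω in p1, X (stopIdx S X lam dl ((n + 1) + d + 1) ω) ω ∂μ
              + ∫ ω in p2, X (stopIdx S X lam dl ((n + 1) + d + 1) ω) ω ∂μ := by
              rw [← hunion]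
              exact setIntegral_union hdisj (S.meas (n + 1) p2 hp2)
                (hIOn p1 hsub1 hp1) (hIOn p2 hsub2 hp2)
          _ = ∫ ω in p1, X (n + 2) ω ∂μ + ∫ ω in p2, X (n + 2) ω ∂μ := by
              rw [hstep1, hstep2]
          _ = ∫ ω in B, X (n + 2) ω ∂μ := by
              rw [← hunion]
              exact (setIntegral_union hdisj (S.meas (n + 1) p2 hp2)
                hint2.integrableOn hint2.integrableOn).symm
          _ = ∫ ω in B, X (n + 1) ω ∂μ := hmart2
      · -- B survives to the next partition
        have hBmem : B ∈ S.part (n + 1) := S.mem_succ_of_ne_split hB hsplit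
        calc ∫ ω in B, X (stopIdx S X lam dl ((n + 1) + d + 1) ω) ω ∂μ
            = ∫ ω in B, X (n + 2) ω ∂μ :=
              ih (n + 1) B hBmem hBD t ht1 (by omega) htau hnof'
          _ = ∫ ω in B, X (n + 1) ω ∂μ := hmart2

end WithMart3

section WithMart4

variable (S)

lemma Ymart_stronglyMeasurable_natSig (mart : IsMart μ X)
    (hnat : ∀ j, 1 ≤ j → natSig X j = S.salg (j - 1)) {i j : ℕ} (hi : 1 ≤ i) (hij : i ≤ j) :
    StronglyMeasurable[natSig (Ymart S X lam dl) j] (Ymart S X lam dl i) := by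
  letI : MeasurableSpace 𝒳 := borel 𝒳
  haveI : BorelSpace 𝒳 := ⟨rfl⟩
  refine stronglyMeasurable_iff_measurable_separable.mpr ⟨?_, ?_⟩
  · intro s hs
    have hcm : MeasurableSet[MeasurableSpace.comap (Ymart S X lam dl i) (borel 𝒳)]
        (Ymart S X lam dl i ⁻¹' s) := ⟨s, hs, rfl⟩
    have hle : MeasurableSpace.comap (Ymart S X lam dl i) (borel 𝒳)
        ≤ natSig (Ymart S X lam dl) j :=
      le_iSup₂ (f := fun (i' : ℕ) (_ : i' ∈ Set.Icc 1 j) =>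
        MeasurableSpace.comap (Ymart S X lam dl i') (borel 𝒳)) i ⟨hi, hij⟩
    exact hle _ hcm
  · exact (range_Ymart_countable S mart hnat i).isSeparable

lemma natSig_Ymart_le (mart : IsMart μ X)
    (hnat : ∀ j, 1 ≤ j → natSig X j = S.salg (j - 1)) (j : ℕ) :
    natSig (Ymart S X lam dl) j ≤ m0 := by
  refine iSup₂_le fun i _ => ?_
  rintro s ⟨s', _, rfl⟩
  exact Ymart_measurable' S mart hnat i s'

/-- Per-piece integral identity for the stopped martingale. -/
lemma Ymart_setIntegral_piece [IsProbabilityMeasure μ] (mart : IsMart μ X)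
    (hnat : ∀ j, 1 ≤ j → natSig X j = S.salg (j - 1)) (hdl : 0 ≤ dl)
    {j k : ℕ} (hjk : j ≤ k) (ω : Ω) :
    ∫ ω' in pieceOf S X lam dl j ω, Ymart S X lam dl k ω' ∂μ
      = ∫ ω' in pieceOf S X lam dl j ω, Ymart S X lam dl j ω' ∂μ := by
  by_cases hD : ω ∈ Dset X lam
  · set t := tau X lam ω with htdef
    set m := stopIdx S X lam dl (t + j) ω with hmdef
    have ht1 : 1 ≤ t := (tau_spec hD).1
    have htm : t ≤ m := tau_le_stopIdx ω (Nat.le_add_right t j)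
    have hmtj : m ≤ t + j := stopIdx_le _ _
    set q := HaarSystem.atomOf S (m - 1) ω with hqdef
    have hpq : pieceOf S X lam dl j ω = q := by rw [pieceOf, if_pos hD]
    have hq : q ∈ S.part (m - 1) := S.atomOf_mem (m - 1) ω
    have hqmeas : MeasurableSet q := S.meas (m - 1) q hq
    have hωq : ω ∈ q := S.mem_atomOf (m - 1) ω
    have hqD : ∀ ω' ∈ q, ω' ∈ Dset X lam ∧ tau X lam ω' = t := fun ω' hω' =>
      tau_congr S mart hnat hD (by omega : t ≤ m - 1 + 1) hω'
    have hXt : ∀ ω' ∈ q, X t ω' = X t ω := fun ω' hω' =>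
      Xconst S mart hnat ht1 (by omega) hq hωq hω'
    have hXm : ∀ ω' ∈ q, X m ω' = X m ω := fun ω' hω' =>
      Xconst S mart hnat (by omega) (by omega) hq hωq hω'
    -- constant value of Ymart j on q
    have hYj : ∀ ω' ∈ q, Ymart S X lam dl j ω' = Ymart S X lam dl j ω := fun ω' hω' =>
      Ymart_congr S mart hnat (le_refl j) hD hω'
    have hIj : ∫ ω' in q, Ymart S X lam dl j ω' ∂μ
        = (μ q).toReal • Ymart S X lam dl j ω := by
      rw [setIntegral_congr_fun hqmeas hYj, setIntegral_const, measureReal_def]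
    -- the value of Ymart k on q
    have hYk : ∀ ω' ∈ q, Ymart S X lam dl k ω'
        = X (stopIdx S X lam dl (t + k) ω') ω' - X t ω := by
      intro ω' hω'
      obtain ⟨hD', ht'⟩ := hqD ω' hω'
      rw [Ymart, if_pos hD', ht', hXt ω' hω']
    have hIOnf : IntegrableOn (fun ω' => X (stopIdx S X lam dl (t + k) ω') ω') q μ := by
      have hIg : Integrable (fun ω' => Ymart S X lam dl k ω' + X t ω') μ :=
        (Ymart_integrable S mart hnat hdl k).add (mart.1 t ht1)
      refine (hIg.integrableOn).congr_fun ?_ hqmeas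
      intro ω' hω'
      obtain ⟨hD', ht'⟩ := hqD ω' hω'
      simp only [Ymart, if_pos hD', ht']
      abel
    have hIk : ∫ ω' in q, Ymart S X lam dl k ω' ∂μ
        = (∫ ω' in q, X (stopIdx S X lam dl (t + k) ω') ω' ∂μ) - (μ q).toReal • X t ω := by
      rw [setIntegral_congr_fun hqmeas hYk]
      rw [integral_sub hIOnf (integrableOn_const (measure_ne_top μ q))]
      congr 1
      exact setIntegral_const _
    -- optional stopping identity on q
    have hnofq : ∀ ω' ∈ q, ∀ i, t ≤ i → i ≤ m - 1 → ¬ fire S X lam dl i ω' := by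
      intro ω' hω' i h1 h2 hfi
      have hfire : fire S X lam dl i ω :=
        (fire_congr S mart hnat hD h1 (by omega) hω').mp hfi
      exact stopIdx_nofire_below (n := t + j) h1 (by omega) hfire
    have harith : (m - 1) + (t + k - m) + 1 = t + k := by omega
    have hOS : ∫ ω' in q, X (stopIdx S X lam dl (t + k) ω') ω' ∂μ
        = ∫ ω' in q, X ((m - 1) + 1) ω' ∂μ := by
      have := optStop S mart hnat hdl (t + k - m) (m - 1) q hq
        (fun ω' hω' => (hqD ω' hω').1) t ht1 (by omega)
        (fun ω' hω' => (hqD ω' hω').2) hnofq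
      rw [harith] at this
      exact this
    have hm11 : m - 1 + 1 = m := by omega
    have hIm : ∫ ω' in q, X ((m - 1) + 1) ω' ∂μ = (μ q).toReal • X m ω := by
      rw [hm11, setIntegral_congr_fun hqmeas hXm, setIntegral_const, measureReal_def]
    have hYjω : Ymart S X lam dl j ω = X m ω - X t ω := by
      rw [Ymart, if_pos hD]
    rw [hpq, hIk, hOS, hIm, hIj, hYjω, smul_sub]
  · have hpq : pieceOf S X lam dl j ω = (Dset X lam)ᶜ := by rw [pieceOf, if_neg hD]
    have hzero : ∀ (i : ℕ), ∫ ω' in (Dset X lam)ᶜ, Ymart S X lam dl i ω' ∂μ = 0 := by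
      intro i
      have : ∀ ω' ∈ (Dset X lam)ᶜ, Ymart S X lam dl i ω' = (0 : 𝒳) := by
        intro ω' hω'
        rw [Ymart, if_neg hω']
      rw [setIntegral_congr_fun (Dset_measurable S mart hnat).compl this, integral_zero]
    rw [hpq, hzero, hzero]

/-- The martingale property of the stopped process. -/
lemma Ymart_condexp [IsProbabilityMeasure μ] (mart : IsMart μ X)
    (hnat : ∀ j, 1 ≤ j → natSig X j = S.salg (j - 1)) (hdl : 0 ≤ dl)
    {j k : ℕ} (hj : 1 ≤ j) (hjk : j ≤ k) :
    (μ[Ymart S X lam dl k| natSig (Ymart S X lam dl) j]) =ᵐ[μ] Ymart S X lam dl j := by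
  have hm : natSig (Ymart S X lam dl) j ≤ m0 := natSig_Ymart_le S mart hnat j
  set QQ : Set (Set Ω) := {q | ∃ ω, q = pieceOf S X lam dl j ω} with hQQ
  have hg_eq : ∀ s : Set Ω, MeasurableSet[natSig (Ymart S X lam dl) j] s → μ s < ⊤ →
      ∫ ω' in s, Ymart S X lam dl j ω' ∂μ = ∫ ω' in s, Ymart S X lam dl k ω' ∂μ := by
    intro s hs _
    -- s respects the partition into pieces
    have hle : natSig (Ymart S X lam dl) j ≤ partAlg QQ := by
      refine iSup₂_le fun i hi => ?_
      rintro s' ⟨t', _, rfl⟩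
      rintro q ⟨ω, rfl⟩
      by_cases hmem : Ymart S X lam dl i ω ∈ t'
      · refine Or.inl fun ω' hω' => ?_
        have := Ymart_eq_on_piece S mart hnat hi.2 hω'
        simp only [Set.mem_preimage]
        rw [this]
        exact hmem
      · refine Or.inr (Set.disjoint_left.mpr fun ω' hω' hmem' => ?_)
        have := Ymart_eq_on_piece S mart hnat hi.2 hω'
        rw [Set.mem_preimage, this] at hmem'
        exact hmem hmem'
    have hchar : ∀ q ∈ QQ, q ⊆ s ∨ Disjoint q s := hle s hs
    set U : Set (Set Ω) := {q ∈ QQ | q ⊆ s} with hU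
    have hsU : s = ⋃₀ U := by
      ext ω
      constructor
      · intro hω
        refine ⟨pieceOf S X lam dl j ω, ⟨⟨ω, rfl⟩, ?_⟩, mem_pieceOf_self S j ω⟩
        rcases hchar _ ⟨ω, rfl⟩ with hsub | hdisj
        · exact hsub
        · exact absurd hω (Set.disjoint_left.mp hdisj (mem_pieceOf_self S j ω))
      · rintro ⟨q, ⟨_, hqs⟩, hωq⟩
        exact hqs hωq
    have hUc : U.Countable := by
      refine Set.Countable.mono ?_ (pieceOf_range_countable (X := X) (lam := lam) (dl := dl) S j)
      rintro q ⟨hq, _⟩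
      exact hq
    haveI : Countable ↥U := hUc.to_subtype
    have hUmeas : ∀ (q : ↥U), MeasurableSet (q : Set Ω) := by
      rintro ⟨q, ⟨⟨ω, rfl⟩, _⟩⟩
      exact pieceOf_measurable S mart hnat j ω
    have hUdisj : Pairwise (Function.onFun Disjoint fun q : ↥U => (q : Set Ω)) := by
      rintro ⟨q1, ⟨⟨ω1, rfl⟩, _⟩⟩ ⟨q2, ⟨⟨ω2, rfl⟩, _⟩⟩ hne
      have hne' : pieceOf S X lam dl j ω1 ≠ pieceOf S X lam dl j ω2 := by
        intro h
        exact hne (Subtype.ext h)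
      refine Set.disjoint_left.mpr fun ω'' h1 h2 => ?_
      exact hne' ((pieceOf_congr S mart hnat h1).symm.trans (pieceOf_congr S mart hnat h2))
    have hiU : s = ⋃ (q : ↥U), (q : Set Ω) := by rw [hsU, Set.sUnion_eq_iUnion]
    have hIk : IntegrableOn (Ymart S X lam dl k) (⋃ (q : ↥U), (q : Set Ω)) μ :=
      (Ymart_integrable S mart hnat hdl k).integrableOn
    have hIj : IntegrableOn (Ymart S X lam dl j) (⋃ (q : ↥U), (q : Set Ω)) μ :=
      (Ymart_integrable S mart hnat hdl j).integrableOn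
    rw [hiU, integral_iUnion hUmeas hUdisj hIk, integral_iUnion hUmeas hUdisj hIj]
    refine tsum_congr fun q => ?_
    obtain ⟨q, ⟨⟨ω, rfl⟩, _⟩⟩ := q
    exact (Ymart_setIntegral_piece S mart hnat hdl hjk ω).symm
  refine (ae_eq_condExp_of_forall_setIntegral_eq hm
    (Ymart_integrable S mart hnat hdl k)
    (fun s _ _ => (Ymart_integrable S mart hnat hdl j).integrableOn)
    (fun s hs hμs => hg_eq s hs hμs)
    (StronglyMeasurable.aestronglyMeasurable (Ymart_stronglyMeasurable_natSig S mart hnat hj (le_refl j)))).symm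

/-- The stopped process is a martingale. -/
lemma Ymart_isMart [IsProbabilityMeasure μ] (mart : IsMart μ X)
    (hnat : ∀ j, 1 ≤ j → natSig X j = S.salg (j - 1)) (hdl : 0 ≤ dl) :
    IsMart μ (Ymart S X lam dl) :=
  ⟨fun j _ => Ymart_integrable S mart hnat hdl j,
    fun j _ => natSig_Ymart_le S mart hnat j,
    fun j k hj hjk => Ymart_condexp S mart hnat hdl hj hjk⟩

end WithMart4

section Final

variable (S)

lemma Dset_eq_martR (hlam : 0 < lam) :
    Dset X lam = {ω | ENNReal.ofReal lam < martR X ω} := by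
  ext ω
  constructor
  · rintro ⟨k, hk1, hR⟩
    refine lt_of_lt_of_le hR (Rbound_mono ?_)
    rintro y ⟨i, h1, hik, rfl⟩
    exact ⟨i, h1, rfl⟩
  · intro hω
    rw [Set.mem_setOf_eq] at hω
    by_contra hcon
    rw [mem_Dset] at hcon
    push_neg at hcon
    have hall : ∀ k, Rbound (prefixSet X k ω) ≤ ENNReal.ofReal lam := by
      intro k
      match k with
      | 0 =>
        rw [prefixSet_zero]
        exact (Rbound_le_ofReal isRBound_empty).trans (ENNReal.ofReal_le_ofReal hlam.le)
      | (n + 1) => exact hcon (n + 1) (by omega)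
    have hfull : martR X ω ≤ ENNReal.ofReal lam := by
      refine ENNReal.le_of_forall_pos_le_add fun ε hε _ => ?_
      set εr := ((ε : ℝ≥0) : ℝ) with hεrdef
      have hεr : 0 < εr := hε
      have hIs : IsRBound {y : 𝒳 | ∃ j, 1 ≤ j ∧ y = X j ω} (lam + εr) := by
        refine ⟨by linarith, fun N y l hy => ?_⟩
        choose jf hjf1 hjf2 using hy
        set k := Finset.univ.sup jf with hk
        obtain ⟨r, hr, hrle⟩ := exists_isRBound_of_Rbound_le hlam.le (hall k) hεr
        have hyk : ∀ i, y i ∈ prefixSet X k ω := by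
          intro i
          exact ⟨jf i, hjf1 i, Finset.le_sup (Finset.mem_univ i), hjf2 i⟩
        refine (hr.2 N y l hyk).trans ?_
        have : r ^ 2 ≤ (lam + εr) ^ 2 := by nlinarith [hr.1]
        exact mul_le_mul_of_nonneg_right this (radAvg_nonneg l)
      calc martR X ω ≤ ENNReal.ofReal (lam + εr) := Rbound_le_ofReal hIs
        _ = ENNReal.ofReal lam + ε := by
          rw [ENNReal.ofReal_add hlam.le hεr.le, hεrdef, ENNReal.ofReal_coe_nnreal]
    exact absurd hω (not_lt.mpr hfull)

lemma norm_le_of_martStar {ω : Ω} {c : ℝ} (hc : 0 ≤ c)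
    (hstar : martStar X ω ≤ ENNReal.ofReal c) {i : ℕ} (hi : 1 ≤ i) : ‖X i ω‖ ≤ c := by
  have h1 : (↑‖X i ω‖₊ : ℝ≥0∞) ≤ martStar X ω :=
    le_iSup₂ (f := fun (j : ℕ) (_ : 1 ≤ j) => (‖X j ω‖₊ : ℝ≥0∞)) i hi
  have h2 : ENNReal.ofReal ‖X i ω‖ ≤ ENNReal.ofReal c := by
    rw [ofReal_norm]
    exact h1.trans hstar
  exact (ENNReal.ofReal_le_ofReal_iff hc).mp h2

/-- The key pointwise estimate: on the bad set the restarted martingale has a big R-bound. -/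
lemma bad_subset [IsProbabilityMeasure μ] (mart : IsMart μ X) (hstd : S.IsStandard)
    (hnat : ∀ j, 1 ≤ j → natSig X j = S.salg (j - 1)) (hlam : 0 < lam) (hdl : 0 < dl)
    {β lam' : ℝ} (hlam' : 0 < lam') (hsum : β * lam = lam + 2 * dl + lam') {ω : Ω}
    (hbR : ENNReal.ofReal (β * lam) < martR X ω)
    (hstar : martStar X ω ≤ ENNReal.ofReal dl) :
    ENNReal.ofReal lam' < martR (Ymart S X lam dl) ω := by
  have hnorm : ∀ i, 1 ≤ i → ‖X i ω‖ ≤ dl := fun i hi =>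
    norm_le_of_martStar hdl.le hstar hi
  have hβlam : lam < β * lam := by nlinarith
  have hD : ω ∈ Dset X lam := by
    rw [Dset_eq_martR (X := X) hlam]
    exact lt_of_le_of_lt (ENNReal.ofReal_le_ofReal hβlam.le) hbR
  set t := tau X lam ω with htdef
  have ht1 : 1 ≤ t := (tau_spec hD).1
  -- no firing ever happens along the trajectory of ω
  have hnofire : ∀ i, t ≤ i → ¬ fire S X lam dl i ω := by
    rintro i hti ⟨ω', hω', hgt⟩
    have hi1 : 1 ≤ i := le_trans ht1 hti
    set A := HaarSystem.atomOf S (i - 1) ω with hAdef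
    have hA : A ∈ S.part (i - 1) := S.atomOf_mem (i - 1) ω
    have hωA : ω ∈ A := S.mem_atomOf (i - 1) ω
    have hXiω : ‖X i ω‖ ≤ dl := hnorm i hi1
    have hXi1ω : ‖X (i + 1) ω‖ ≤ dl := hnorm (i + 1) (by omega)
    have hXtω : ‖X t ω‖ ≤ dl := hnorm t ht1
    have hi11 : i - 1 + 1 = i := by omega
    by_cases hAs : A = S.splitSet (i - 1)
    · have hmem : ∀ {ω''}, ω'' ∈ A → ω'' ∈ S.piece1 (i - 1) ∨ ω'' ∈ S.piece2 (i - 1) := by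
        intro ω'' hω''
        have : ω'' ∈ S.piece1 (i - 1) ∪ S.piece2 (i - 1) := by
          rw [S.union_pieces (i - 1), ← hAs]
          exact hω''
        exact this
      have hXi1 : X (i - 1 + 2) = X (i + 1) := by rw [show i - 1 + 2 = i + 1 by omega]
      have hXi : X (i - 1 + 1) = X i := by rw [hi11]
      have hbound : ‖X (i + 1) ω' - X t ω‖ ≤ 4 * dl := by
        rcases hmem hω' with h1' | h2'
        · rcases hmem hωA with h1 | h2
          · -- same piece p1
            have := Xconst S mart hnat (i := i + 1) (n := i - 1 + 1) (by omega) (by omega)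
              (S.piece1_mem (i - 1)) h1 h1'
            rw [this]
            calc ‖X (i + 1) ω - X t ω‖ ≤ ‖X (i + 1) ω‖ + ‖X t ω‖ := norm_sub_le _ _
              _ ≤ 4 * dl := by linarith
          · -- ω' ∈ p1, ω ∈ p2
            have hs := sibling S hstd mart hnat (i - 1) h1' h2
            rw [hXi1, hXi] at hs
            have hXiω' : X i ω' = X i ω :=
              Xconst S mart hnat hi1 (by omega) hA hωA hω'
            -- X (i+1) ω' = 2 • X i ω' - X (i+1) ω
            have hval : X (i + 1) ω' = (2 : ℝ) • X i ω - X (i + 1) ω := by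
              rw [← hXiω', eq_sub_iff_add_eq]
              exact hs
            rw [hval]
            calc ‖(2 : ℝ) • X i ω - X (i + 1) ω - X t ω‖
                ≤ ‖(2 : ℝ) • X i ω - X (i + 1) ω‖ + ‖X t ω‖ := norm_sub_le _ _
              _ ≤ ‖(2 : ℝ) • X i ω‖ + ‖X (i + 1) ω‖ + ‖X t ω‖ := by
                  have := norm_sub_le ((2 : ℝ) • X i ω) (X (i + 1) ω)
                  linarith
              _ ≤ 4 * dl := by
                  rw [norm_smul]
                  simp only [Real.norm_ofNat]
                  linarith
        · rcases hmem hωA with h1 | h2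
          · -- ω ∈ p1, ω' ∈ p2
            have hs := sibling S hstd mart hnat (i - 1) h1 h2'
            rw [hXi1, hXi] at hs
            have hval : X (i + 1) ω' = (2 : ℝ) • X i ω - X (i + 1) ω := by
              rw [eq_sub_iff_add_eq, add_comm]
              exact hs
            rw [hval]
            calc ‖(2 : ℝ) • X i ω - X (i + 1) ω - X t ω‖
                ≤ ‖(2 : ℝ) • X i ω - X (i + 1) ω‖ + ‖X t ω‖ := norm_sub_le _ _
              _ ≤ ‖(2 : ℝ) • X i ω‖ + ‖X (i + 1) ω‖ + ‖X t ω‖ := by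
                  have := norm_sub_le ((2 : ℝ) • X i ω) (X (i + 1) ω)
                  linarith
              _ ≤ 4 * dl := by
                  rw [norm_smul]
                  simp only [Real.norm_ofNat]
                  linarith
          · -- same piece p2
            have := Xconst S mart hnat (i := i + 1) (n := i - 1 + 1) (by omega) (by omega)
              (S.piece2_mem (i - 1)) h2 h2'
            rw [this]
            calc ‖X (i + 1) ω - X t ω‖ ≤ ‖X (i + 1) ω‖ + ‖X t ω‖ := norm_sub_le _ _
              _ ≤ 4 * dl := by linarith
      linarith
    · -- the atom does not split
      have hAmem : A ∈ S.part (i - 1 + 1) := S.mem_succ_of_ne_split hA hAs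
      have := Xconst S mart hnat (i := i + 1) (n := i - 1 + 1) (by omega) (by omega)
        hAmem hωA hω'
      rw [this] at hgt
      have : ‖X (i + 1) ω - X t ω‖ ≤ 2 * dl := by
        calc ‖X (i + 1) ω - X t ω‖ ≤ ‖X (i + 1) ω‖ + ‖X t ω‖ := norm_sub_le _ _
          _ ≤ 2 * dl := by linarith
      linarith
  have hstop : ∀ i, stopIdx S X lam dl (t + i) ω = t + i := fun i =>
    stopIdx_eq_of_nofire fun i' h1 _ => hnofire i' h1
  have hY : ∀ i, 1 ≤ i → Ymart S X lam dl i ω = X (t + i) ω - X t ω := by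
    intro i _
    rw [Ymart, if_pos hD, ← htdef, hstop i]
  -- now the R-bound chain
  by_contra hcon
  push_neg at hcon
  set Yset : Set 𝒳 := {y | ∃ j, 1 ≤ j ∧ y = Ymart S X lam dl j ω} with hYset
  have hconY : Rbound Yset ≤ ENNReal.ofReal lam' := hcon
  have hRprefix : Rbound (prefixSet X (t - 1) ω) ≤ ENNReal.ofReal lam := by
    rcases Nat.lt_or_ge t 2 with h2 | h2
    · have : t - 1 = 0 := by omega
      rw [this, prefixSet_zero]
      exact (Rbound_le_ofReal isRBound_empty).trans (ENNReal.ofReal_le_ofReal hlam.le)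
    · have hmin := tau_min hD (show t - 1 < t by omega)
      push_neg at hmin
      exact hmin (by omega)
  have hsubset : {y : 𝒳 | ∃ j, 1 ≤ j ∧ y = X j ω} ⊆
      prefixSet X (t - 1) ω ∪ ({X t ω} ∪ ((fun z => X t ω + z) '' Yset)) := by
    rintro y ⟨i, hi1, rfl⟩
    rcases Nat.lt_or_ge i t with hlt | hge
    · exact Or.inl ⟨i, hi1, by omega, rfl⟩
    · rcases eq_or_lt_of_le hge with heq | hgt
      · exact Or.inr (Or.inl (by rw [← heq]; exact Set.mem_singleton _))
      · refine Or.inr (Or.inr ?_)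
        refine ⟨Ymart S X lam dl (i - t) ω, ⟨i - t, by omega, rfl⟩, ?_⟩
        rw [hY (i - t) (by omega), show t + (i - t) = i by omega]
        show X t ω + (X i ω - X t ω) = X i ω
        abel
  have hfull : martR X ω ≤ ENNReal.ofReal (β * lam) := by
    refine ENNReal.le_of_forall_pos_le_add fun ε hε _ => ?_
    set εr := ((ε : ℝ≥0) : ℝ) / 2 with hεrdef
    have hεr : 0 < εr := by
      rw [hεrdef]
      have : (0 : ℝ) < ((ε : ℝ≥0) : ℝ) := hε
      linarith
    obtain ⟨rP, hrP, hrPle⟩ := exists_isRBound_of_Rbound_le hlam.le hRprefix hεr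
    obtain ⟨rY, hrY, hrYle⟩ := exists_isRBound_of_Rbound_le hlam'.le hconY hεr
    have hIs : IsRBound {y : 𝒳 | ∃ j, 1 ≤ j ∧ y = X j ω}
        (rP + (‖X t ω‖ + (‖X t ω‖ + rY))) :=
      isRBound_mono (isRBound_union hrP (isRBound_union (isRBound_singleton (X t ω))
        (isRBound_translate hrY (X t ω)))) hsubset
    have hXtn : ‖X t ω‖ ≤ dl := hnorm t ht1
    have hbd : rP + (‖X t ω‖ + (‖X t ω‖ + rY)) ≤ β * lam + ((ε : ℝ≥0) : ℝ) := by
      have : rP + (‖X t ω‖ + (‖X t ω‖ + rY)) ≤ (lam + εr) + (dl + (dl + (lam' + εr))) := by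
        have hn := norm_nonneg (X t ω)
        gcongr
      nlinarith [this]
    calc martR X ω ≤ ENNReal.ofReal (β * lam + ((ε : ℝ≥0) : ℝ)) :=
          Rbound_le_ofReal (isRBound_weaken hIs hbd)
      _ = ENNReal.ofReal (β * lam) + ε := by
          rw [ENNReal.ofReal_add (by nlinarith) (by positivity), ENNReal.ofReal_coe_nnreal]
  exact absurd hbR (not_lt.mpr hfull)

/-- `L¹` bound for the stopped martingale. -/
lemma Ymart_martNorm_le [IsProbabilityMeasure μ] (mart : IsMart μ X)
    (hnat : ∀ j, 1 ≤ j → natSig X j = S.salg (j - 1)) (hdl : 0 ≤ dl) :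
    martNorm μ (Ymart S X lam dl) 1 ≤ ENNReal.ofReal (4 * dl) * μ (Dset X lam) := by
  refine iSup₂_le fun j _ => ?_
  rw [eLpNorm_one_eq_lintegral_enorm]
  calc ∫⁻ ω, ↑‖Ymart S X lam dl j ω‖₊ ∂μ
      ≤ ∫⁻ ω, (Dset X lam).indicator (fun _ => ENNReal.ofReal (4 * dl)) ω ∂μ := by
        refine lintegral_mono fun ω => ?_
        by_cases hD : ω ∈ Dset X lam
        · rw [Set.indicator_of_mem hD, ← enorm_eq_nnnorm, ← ofReal_norm]
          exact ENNReal.ofReal_le_ofReal (Ymart_norm_le (by linarith) j ω)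
        · rw [Set.indicator_of_notMem hD, Ymart, if_neg hD]
          simp
    _ = ENNReal.ofReal (4 * dl) * μ (Dset X lam) := by
        rw [lintegral_indicator (Dset_measurable S mart hnat), setLIntegral_const]

end Final


end Dynamics

/-- The good-λ inequality: if `𝒳` has weak RMF with constant `C`, then for
`δ ∈ (0,1)` and `β > 2δ + 1`, every `L^p`-bounded standard Haar martingale satisfies
`ℙ(X_R^* > βλ, X^* ≤ δλ) ≤ α(δ) ℙ(X_R^* > λ)` with `α(δ) = 4Cδ/(β − 2δ − 1)`;
in particular `α(δ) → 0` as `δ → 0`. -/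
theorem statement14 {𝒳 : Type*} [NormedAddCommGroup 𝒳] [NormedSpace ℝ 𝒳] [CompleteSpace 𝒳]
    (C : ℝ) (hC : 0 ≤ C) (h : WeakRMFConst.{u} 𝒳 C) :
    (∀ δ β p : ℝ, 0 < δ → δ < 1 → 2 * δ + 1 < β → 1 < p →
      ∀ (Ω : Type u) (m0 : MeasurableSpace Ω) (μ : Measure Ω), IsProbabilityMeasure μ →
        ∀ X : ℕ → Ω → 𝒳, IsStdHaarMart μ X → martNorm μ X (ENNReal.ofReal p) < ⊤ →
          ∀ lam : ℝ, 0 < lam →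
            μ {ω | ENNReal.ofReal (β * lam) < martR X ω ∧
                martStar X ω ≤ ENNReal.ofReal (δ * lam)} ≤
              ENNReal.ofReal (4 * C * δ / (β - 2 * δ - 1)) *
                μ {ω | ENNReal.ofReal lam < martR X ω}) ∧
    ∀ β : ℝ, 1 < β →
      Filter.Tendsto (fun δ : ℝ => 4 * C * δ / (β - 2 * δ - 1))
        (nhdsWithin 0 (Set.Ioi 0)) (nhds 0) := by
  constructor
  · intro δ β p hδ0 hδ1 hβ hp Ω m0 μ hprob X hX hLp lam hlam
    obtain ⟨mart, S, hstd, hnat⟩ := hX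
    haveI := hprob
    set dl := δ * lam with hdldef
    have hdl : 0 < dl := mul_pos hδ0 hlam
    set lam' := (β - 2 * δ - 1) * lam with hlam'def
    have hβδ : 0 < β - 2 * δ - 1 := by linarith
    have hlam' : 0 < lam' := mul_pos hβδ hlam
    have hsum : β * lam = lam + 2 * dl + lam' := by rw [hdldef, hlam'def]; ring
    have hmartY : IsMart μ (Ymart S X lam dl) := Ymart_isMart S mart hnat hdl.le
    have hnormY := Ymart_martNorm_le (lam := lam) S mart hnat hdl.le
    have hfin : martNorm μ (Ymart S X lam dl) 1 < ⊤ := by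
      refine lt_of_le_of_lt hnormY ?_
      calc ENNReal.ofReal (4 * dl) * μ (Dset X lam)
          ≤ ENNReal.ofReal (4 * dl) * 1 := mul_le_mul_right prob_le_one _
        _ = ENNReal.ofReal (4 * dl) := mul_one _
        _ < ⊤ := ENNReal.ofReal_lt_top
    have happ := h Ω m0 μ hprob (Ymart S X lam dl) hmartY hfin lam' hlam'
    calc μ {ω | ENNReal.ofReal (β * lam) < martR X ω ∧
            martStar X ω ≤ ENNReal.ofReal dl}
        ≤ μ {ω | ENNReal.ofReal lam' < martR (Ymart S X lam dl) ω} := by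
          refine measure_mono fun ω hω => ?_
          exact bad_subset S mart hstd hnat hlam hdl hlam' hsum hω.1 hω.2
      _ ≤ ENNReal.ofReal (C / lam') * martNorm μ (Ymart S X lam dl) 1 := happ
      _ ≤ ENNReal.ofReal (C / lam') * (ENNReal.ofReal (4 * dl) * μ (Dset X lam)) :=
          mul_le_mul_right hnormY _
      _ = ENNReal.ofReal (4 * C * δ / (β - 2 * δ - 1)) *
            μ {ω | ENNReal.ofReal lam < martR X ω} := by
          rw [← mul_assoc, ← ENNReal.ofReal_mul (div_nonneg hC hlam'.le),
            ← Dset_eq_martR (X := X) hlam]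
          congr 2
          rw [hdldef, hlam'def]
          field_simp
  · intro β hβ
    have hne : β - 2 * (0 : ℝ) - 1 ≠ 0 := by
      have : β - 2 * (0 : ℝ) - 1 = β - 1 := by ring
      rw [this]
      exact sub_ne_zero.mpr (ne_of_gt hβ)
    have hcont : ContinuousAt (fun δ : ℝ => 4 * C * δ / (β - 2 * δ - 1)) 0 := by
      apply ContinuousAt.div
      · fun_prop
      · fun_prop
      · exact hne
    have h0 : (fun δ : ℝ => 4 * C * δ / (β - 2 * δ - 1)) 0 = 0 := by
      simp
    have htd := hcont.tendsto
    have h00 : 4 * C * 0 / (β - 2 * 0 - 1) = 0 := by simp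
    rw [h00] at htd
    exact htd.mono_left nhdsWithin_le_nhds

end RMF
end
end

section
/- Let 1 < p < ∞, C > 0, and let 𝒳 be a Banach space. Suppose v, defined on pairs (𝒯,T) with 𝒯 a finite subset of 𝒳 and T ∈ 𝒳, satisfies: v(𝒯,T) ≥ 𝓡(𝒯)^p − C‖T‖^p; v({T},T) ≤ 0; v(𝒯 ∪ {T},T) = v(𝒯,T); and T ↦ v(𝒯,T) is concave for every finite 𝒯. Then for every simple martingale (X_j)_{j=1}^N in 𝒳 and every 2 ≤ k ≤ N, 𝔼 v({X_1,…,X_k}, X_k) ≤ 𝔼 v({X_1,…,X_{k−1}}, X_{k−1}). -/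
open MeasureTheory Finset Set
open scoped ENNReal NNReal

noncomputable section

namespace RMF

open scoped Classical

universe u

/-- Finite Jensen's inequality for a concave function, unnormalized weights version. -/
lemma jensen_aux {𝒳 : Type*} [NormedAddCommGroup 𝒳] [NormedSpace ℝ 𝒳]
    (f : 𝒳 → ℝ) (hf : ConcaveOn ℝ Set.univ f) (s : Finset 𝒳) (w : 𝒳 → ℝ)
    (hw : ∀ x ∈ s, 0 ≤ w x) (m : ℝ) (hm : 0 ≤ m)
    (hsum : ∑ x ∈ s, w x = m) (y : 𝒳) (hy : ∑ x ∈ s, w x • x = m • y) :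
    ∑ x ∈ s, w x * f x ≤ m * f y := by
  rcases eq_or_lt_of_le hm with hmz | hmpos
  · have hz : ∀ x ∈ s, w x = 0 :=
      (Finset.sum_eq_zero_iff_of_nonneg hw).1 (hsum.trans hmz.symm)
    rw [Finset.sum_eq_zero fun x hx => by rw [hz x hx, zero_mul], ← hmz, zero_mul]
  · have hmne : m ≠ 0 := ne_of_gt hmpos
    have hJ := hf.le_map_sum (t := s) (w := fun x => w x / m) (p := fun x => x)
      (fun x hx => div_nonneg (hw x hx) hm) (by rw [← Finset.sum_div, hsum, div_self hmne])
      (fun x _ => Set.mem_univ x)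
    have hbar : ∑ x ∈ s, (w x / m) • x = y := by
      have h1 : ∑ x ∈ s, (w x / m) • x = m⁻¹ • ∑ x ∈ s, w x • x := by
        rw [Finset.smul_sum]
        exact Finset.sum_congr rfl fun x _ => by rw [div_eq_inv_mul, mul_smul]
      rw [h1, hy, smul_smul, inv_mul_cancel₀ hmne, one_smul]
    rw [hbar] at hJ
    calc ∑ x ∈ s, w x * f x = m * ∑ x ∈ s, (w x / m) • f x := by
          rw [Finset.mul_sum]
          refine Finset.sum_congr rfl fun x _ => ?_
          rw [smul_eq_mul, ← mul_assoc]
          congr 1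
          field_simp
      _ ≤ m * f y := mul_le_mul_of_nonneg_left hJ hm

/-- If `v` majorizes `u(𝒯,T) = 𝓡(𝒯)^p − C‖T‖^p` and is concave in its second
variable, then `𝔼 v({X_1,…,X_k}, X_k)` is non-increasing in `k` along simple
martingales. -/
theorem statement17 {𝒳 : Type*} [NormedAddCommGroup 𝒳] [NormedSpace ℝ 𝒳] [CompleteSpace 𝒳]
    [DecidableEq 𝒳] (p C : ℝ) (hp1 : 1 < p) (hC : 0 < C) (v : Finset 𝒳 → 𝒳 → ℝ)
    (h1 : ∀ (𝒯 : Finset 𝒳) (T : 𝒳),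
      (Rbound (↑𝒯 : Set 𝒳)).toReal ^ p - C * ‖T‖ ^ p ≤ v 𝒯 T)
    (h2 : ∀ T : 𝒳, v {T} T ≤ 0)
    (h3 : ∀ (𝒯 : Finset 𝒳) (T : 𝒳), v (insert T 𝒯) T = v 𝒯 T)
    (h4 : ∀ 𝒯 : Finset 𝒳, ConcaveOn ℝ Set.univ (v 𝒯)) :
    ∀ (Ω : Type*) (m0 : MeasurableSpace Ω) (μ : Measure Ω), IsProbabilityMeasure μ →
      ∀ (N : ℕ) (X : ℕ → Ω → 𝒳), IsSimpleMart μ X N →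
        ∀ k, 2 ≤ k → k ≤ N →
          ∫ ω, v (martSet X k ω) (X k ω) ∂μ ≤
            ∫ ω, v (martSet X (k - 1) ω) (X (k - 1) ω) ∂μ := by
  intro Ω m0 μ hμ N X hX k hk2 hkN
  classical
  obtain ⟨⟨hint, hle, hmart⟩, hfin⟩ := hX
  set j := k - 1 with hjdef
  have hkj : k = j + 1 := by omega
  have hj1 : 1 ≤ j := by omega
  have hjN : j ≤ N := by omega
  have hk1 : 1 ≤ k := by omega
  letI : MeasurableSpace 𝒳 := borel 𝒳
  haveI : BorelSpace 𝒳 := ⟨rfl⟩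
  -- finsets of values
  set F : ℕ → Finset 𝒳 := fun i =>
    if h : 1 ≤ i ∧ i ≤ N then (hfin i h.1 h.2).toFinset else ∅ with hF
  have hFmem : ∀ i, 1 ≤ i → i ≤ N → ∀ ω, X i ω ∈ F i := by
    intro i h1i h2i ω
    simp only [hF, dif_pos (And.intro h1i h2i), Set.Finite.mem_toFinset]
    exact Set.mem_range_self ω
  set R : Finset 𝒳 := (Finset.Icc 1 j).biUnion F with hR
  set Rk : Finset 𝒳 := F k with hRk
  have hXkRk : ∀ ω, X k ω ∈ Rk := fun ω => hFmem k hk1 hkN ω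
  set P : Finset (Finset 𝒳 × 𝒳) := R.powerset ×ˢ R with hP
  set G : Ω → Finset 𝒳 × 𝒳 := fun ω => (martSet X j ω, X j ω) with hG
  set A : Finset 𝒳 × 𝒳 → Set Ω := fun c => G ⁻¹' {c} with hA
  set B : 𝒳 → Set Ω := fun x => X k ⁻¹' {x} with hB
  have hGP : ∀ ω, G ω ∈ P := by
    intro ω
    refine Finset.mem_product.2 ⟨Finset.mem_powerset.2 ?_, ?_⟩
    · intro t ht
      obtain ⟨i, hi, rfl⟩ := Finset.mem_image.1 ht
      have hiIcc := Finset.mem_Icc.1 hi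
      exact Finset.mem_biUnion.2 ⟨i, hi, hFmem i hiIcc.1 (le_trans hiIcc.2 hjN) ω⟩
    · exact Finset.mem_biUnion.2 ⟨j, Finset.mem_Icc.2 ⟨hj1, le_rfl⟩, hFmem j hj1 hjN ω⟩
  -- measurability w.r.t. the natural filtration
  have hmsing : ∀ t : 𝒳, MeasurableSet {t} := fun t => measurableSet_singleton t
  have hcomap : ∀ i, 1 ≤ i → i ≤ j →
      ∀ S : Set 𝒳, MeasurableSet S → MeasurableSet[natSig X j] (X i ⁻¹' S) := by
    intro i h1 h2 S hS
    have hle' : MeasurableSpace.comap (X i) (borel 𝒳) ≤ natSig X j :=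
      le_iSup₂ (f := fun i (_ : i ∈ Set.Icc 1 j) =>
        MeasurableSpace.comap (X i) (borel 𝒳)) i ⟨h1, h2⟩
    exact hle' _ ⟨S, hS, rfl⟩
  have hAmeasF : ∀ c, MeasurableSet[natSig X j] (A c) := by
    intro c
    have h1 : A c = ({ω | martSet X j ω = c.1} ∩ (X j ⁻¹' {c.2})) := by
      ext ω
      simp only [hA, Set.mem_preimage, Set.mem_singleton_iff, hG, Prod.ext_iff,
        Set.mem_inter_iff, Set.mem_setOf_eq]
    have h2 : {ω | martSet X j ω = c.1} =
        (⋂ i ∈ Finset.Icc 1 j, X i ⁻¹' (↑c.1 : Set 𝒳)) ∩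
          (⋂ t ∈ c.1, ⋃ i ∈ Finset.Icc 1 j, X i ⁻¹' {t}) := by
      ext ω
      simp only [Set.mem_setOf_eq, Set.mem_inter_iff, Set.mem_iInter, Set.mem_iUnion,
        Set.mem_preimage, Finset.mem_coe, Set.mem_singleton_iff]
      constructor
      · intro heq
        constructor
        · intro i hi
          rw [← heq]
          exact Finset.mem_image_of_mem _ hi
        · intro t ht
          rw [← heq] at ht
          obtain ⟨i, hi, hx⟩ := Finset.mem_image.1 ht
          exact ⟨i, hi, hx⟩
      · rintro ⟨ha, hb⟩
        apply Finset.Subset.antisymm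
        · intro t ht
          obtain ⟨i, hi, rfl⟩ := Finset.mem_image.1 ht
          exact ha i hi
        · intro t ht
          obtain ⟨i, hi, hx⟩ := hb t ht
          exact Finset.mem_image.2 ⟨i, hi, hx⟩
    rw [h1, h2]
    refine MeasurableSet.inter (MeasurableSet.inter ?_ ?_) ?_
    · exact MeasurableSet.biInter (Finset.Icc 1 j).countable_toSet (fun i hi =>
        hcomap i (Finset.mem_Icc.1 hi).1 (Finset.mem_Icc.1 hi).2 _ c.1.measurableSet)
    · exact MeasurableSet.biInter c.1.countable_toSet (fun t _ =>
        MeasurableSet.biUnion (Finset.Icc 1 j).countable_toSet (fun i hi =>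
          hcomap i (Finset.mem_Icc.1 hi).1 (Finset.mem_Icc.1 hi).2 _ (hmsing t)))
    · exact hcomap j hj1 le_rfl _ (hmsing c.2)
  have hmFle : natSig X j ≤ m0 := hle j hj1 hjN
  have hAm : ∀ c, MeasurableSet (A c) := fun c => hmFle _ (hAmeasF c)
  have hBm : ∀ x, MeasurableSet (B x) := by
    intro x
    have h1 : MeasurableSpace.comap (X k) (borel 𝒳) ≤ natSig X k :=
      le_iSup₂ (f := fun i (_ : i ∈ Set.Icc 1 k) =>
        MeasurableSpace.comap (X i) (borel 𝒳)) k ⟨hk1, le_rfl⟩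
    exact hle k hk1 hkN _ (h1 _ ⟨{x}, hmsing x, rfl⟩)
  -- the martingale property on the sets A c
  have hAeq : ∀ c, ∫ ω in A c, X k ω ∂μ = (μ (A c)).toReal • c.2 := by
    intro c
    have e1 : ∫ ω in A c, X k ω ∂μ = ∫ ω in A c, (μ[X k|natSig X j]) ω ∂μ :=
      (setIntegral_condExp hmFle (hint k hk1 hkN) (hAmeasF c)).symm
    have e2 : ∫ ω in A c, (μ[X k|natSig X j]) ω ∂μ = ∫ ω in A c, X j ω ∂μ :=
      integral_congr_ae (ae_restrict_of_ae (hmart j k hj1 (by omega) hkN))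
    have e3 : Set.EqOn (fun ω => X j ω) (fun _ => c.2) (A c) := by
      intro ω hω
      have hωc : G ω = c := hω
      simp only
      rw [← hωc]
    rw [e1, e2, setIntegral_congr_fun (hAm c) e3, setIntegral_const, measureReal_def]
  -- pointwise decompositions
  have hLpt : ∀ ω, v (martSet X k ω) (X k ω) =
      ∑ c ∈ P, ∑ x ∈ Rk, Set.indicator (A c ∩ B x) (fun _ => v c.1 x) ω := by
    intro ω
    have hms : martSet X k ω = insert (X k ω) (martSet X j ω) := by
      have hicc : Finset.Icc 1 k = insert k (Finset.Icc 1 j) := by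
        ext i; simp only [Finset.mem_Icc, Finset.mem_insert]; omega
      simp only [martSet, hicc, Finset.image_insert]
    have hind : ∀ c x, Set.indicator (A c ∩ B x) (fun _ => v c.1 x) ω
        = if G ω = c ∧ X k ω = x then v c.1 x else 0 := by
      intro c x
      simp only [Set.indicator_apply, hA, hB, Set.mem_inter_iff, Set.mem_preimage,
        Set.mem_singleton_iff]
    have hsum : ∑ c ∈ P, ∑ x ∈ Rk, Set.indicator (A c ∩ B x) (fun _ => v c.1 x) ω
        = v (martSet X j ω) (X k ω) := by
      have hstep : ∀ c ∈ P, (∑ x ∈ Rk, Set.indicator (A c ∩ B x) (fun _ => v c.1 x) ω)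
          = if G ω = c then v c.1 (X k ω) else 0 := by
        intro c _
        by_cases hc : G ω = c
        · simp only [hind, hc, true_and, if_pos]
          rw [Finset.sum_ite_eq Rk (X k ω) (fun x => v c.1 x), if_pos (hXkRk ω)]
        · simp [hind, hc]
      rw [Finset.sum_congr rfl hstep, Finset.sum_ite_eq P (G ω) (fun c => v c.1 (X k ω)),
        if_pos (hGP ω)]
    rw [hms, h3, ← hsum]
  have hRpt : ∀ ω, v (martSet X j ω) (X j ω)
      = ∑ c ∈ P, Set.indicator (A c) (fun _ => v c.1 c.2) ω := by
    intro ω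
    have hind : ∀ c, Set.indicator (A c) (fun _ => v c.1 c.2) ω
        = if G ω = c then v c.1 c.2 else 0 := fun c => by
      simp only [Set.indicator_apply, hA, Set.mem_preimage, Set.mem_singleton_iff]
    rw [Finset.sum_congr rfl fun c _ => hind c,
      Finset.sum_ite_eq P (G ω) (fun c => v c.1 c.2), if_pos (hGP ω)]
  -- integral computations
  have hInt1 : ∫ ω, v (martSet X k ω) (X k ω) ∂μ
      = ∑ c ∈ P, ∑ x ∈ Rk, (μ (A c ∩ B x)).toReal * v c.1 x := by
    rw [show (fun ω => v (martSet X k ω) (X k ω))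
        = fun ω => ∑ c ∈ P, ∑ x ∈ Rk, Set.indicator (A c ∩ B x) (fun _ => v c.1 x) ω
      from funext hLpt]
    rw [integral_finset_sum P (fun c _ => integrable_finset_sum Rk (fun x _ =>
      (integrable_const (v c.1 x)).indicator ((hAm c).inter (hBm x))))]
    refine Finset.sum_congr rfl fun c _ => ?_
    rw [integral_finset_sum Rk (fun x _ =>
      (integrable_const (v c.1 x)).indicator ((hAm c).inter (hBm x)))]
    refine Finset.sum_congr rfl fun x _ => ?_
    rw [integral_indicator_const _ ((hAm c).inter (hBm x)), smul_eq_mul, measureReal_def]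
  have hInt2 : ∫ ω, v (martSet X j ω) (X j ω) ∂μ
      = ∑ c ∈ P, (μ (A c)).toReal * v c.1 c.2 := by
    rw [show (fun ω => v (martSet X j ω) (X j ω))
        = fun ω => ∑ c ∈ P, Set.indicator (A c) (fun _ => v c.1 c.2) ω
      from funext hRpt]
    rw [integral_finset_sum P (fun c _ =>
      (integrable_const (v c.1 c.2)).indicator (hAm c))]
    refine Finset.sum_congr rfl fun c _ => ?_
    rw [integral_indicator_const _ (hAm c), smul_eq_mul, measureReal_def]
  -- weights sum to total measure
  have hwsum : ∀ c, ∑ x ∈ Rk, (μ (A c ∩ B x)).toReal = (μ (A c)).toReal := by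
    intro c
    have hU : A c = ⋃ x ∈ Rk, (A c ∩ B x) := by
      ext ω
      simp only [Set.mem_iUnion, Set.mem_inter_iff, hB, Set.mem_preimage,
        Set.mem_singleton_iff]
      constructor
      · intro hω; exact ⟨X k ω, hXkRk ω, hω, rfl⟩
      · rintro ⟨x, _, hω, _⟩; exact hω
    have hdisj : (↑Rk : Set 𝒳).PairwiseDisjoint (fun x => A c ∩ B x) := by
      intro x _ y _ hxy
      refine Set.disjoint_left.2 fun ω hx hy => hxy ?_
      have ex : X k ω = x := hx.2
      have ey : X k ω = y := hy.2
      exact ex.symm.trans ey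
    have hμs : μ (A c) = ∑ x ∈ Rk, μ (A c ∩ B x) :=
      (congrArg μ hU).trans (measure_biUnion_finset hdisj fun x _ => (hAm c).inter (hBm x))
    rw [hμs, ENNReal.toReal_sum fun x _ => measure_ne_top μ _]
  -- barycenter identity
  have hvec : ∀ c, ∑ x ∈ Rk, (μ (A c ∩ B x)).toReal • x = (μ (A c)).toReal • c.2 := by
    intro c
    have hpt : ∀ ω, Set.indicator (A c) (X k) ω
        = ∑ x ∈ Rk, Set.indicator (A c ∩ B x) (fun _ => x) ω := by
      intro ω
      have hind : ∀ x : 𝒳, Set.indicator (A c ∩ B x) (fun _ => x) ω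
          = if ω ∈ A c ∧ X k ω = x then x else 0 := fun x => by
        simp only [Set.indicator_apply, hB, Set.mem_inter_iff, Set.mem_preimage,
          Set.mem_singleton_iff]
      rw [Finset.sum_congr rfl fun x _ => hind x]
      by_cases hω : ω ∈ A c
      · simp only [hω, true_and, Set.indicator_of_mem hω]
        rw [Finset.sum_ite_eq Rk (X k ω) (fun x => x), if_pos (hXkRk ω)]
      · simp [hω, Set.indicator_of_notMem hω]
    have h1 : ∫ ω, Set.indicator (A c) (X k) ω ∂μ = (μ (A c)).toReal • c.2 := by
      rw [integral_indicator (hAm c)]; exact hAeq c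
    have h2 : ∫ ω, Set.indicator (A c) (X k) ω ∂μ
        = ∑ x ∈ Rk, (μ (A c ∩ B x)).toReal • x := by
      rw [show Set.indicator (A c) (X k)
          = fun ω => ∑ x ∈ Rk, Set.indicator (A c ∩ B x) (fun _ => x) ω from funext hpt,
        integral_finset_sum Rk (fun x _ =>
          (integrable_const x).indicator ((hAm c).inter (hBm x)))]
      exact Finset.sum_congr rfl fun x _ => integral_indicator_const x ((hAm c).inter (hBm x))
    rw [← h2, h1]
  -- Jensen per piece and conclusion
  rw [hInt1, hInt2]
  refine Finset.sum_le_sum fun c _ => ?_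
  exact jensen_aux (v c.1) (h4 c.1) Rk (fun x => (μ (A c ∩ B x)).toReal)
    (fun x _ => ENNReal.toReal_nonneg) ((μ (A c)).toReal) ENNReal.toReal_nonneg
    (hwsum c) c.2 (hvec c)


end RMF
end
end
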